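/- arXiv:1909.13555 — 10 statements merged into one kernel-verified Lean document; each statement's English description precedes it below -/
import Mathlib

section
/- Let h : ℝ → ℝ be a continuous function that is periodic with period π/2. Define H : ℝ → ℝ by H(θ) = (1/4) ∫_{-π/4}^{π/4} |sin(2(θ - θ'))| h(θ') dθ'. Then H is twice differentiable and satisfies the ODE 4·H(θ) + H''(θ) = h(θ) for every θ ∈ ℝ. -/
/-!
By `π/2`-periodicity the window of integration may be centred at `θ`, where
`|sin (2(θ - t))| = ± sin (2(θ - t))` according to the sign of `θ - t`. Expanding
`sin (2θ - 2t)` gives `4 H = sin (2θ) P - cos (2θ) Q`, where `P` and `Q` are the differences of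
the integrals of `cos (2t) h t` and `sin (2t) h t` over the two halves of the window. The
periodicity of `h` makes the boundary terms cancel, so `P' = 2 cos (2θ) h` and
`Q' = 2 sin (2θ) h`; this is exactly the variation-of-parameters form of a solution of
`u'' + 4 u = 4 h`.
-/

open Real MeasureTheory intervalIntegral

noncomputable def tentIntegral (φ : ℝ → ℝ) (c x : ℝ) : ℝ :=
  (∫ t in (x - c)..x, φ t) - ∫ t in x..(x + c), φ t

theorem tentIntegral_eq_primitive {φ : ℝ → ℝ} (hφ : Continuous φ) (c : ℝ) :
    tentIntegral φ c = fun x => 2 * (∫ t in (0 : ℝ)..x, φ t) -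
      (∫ t in (0 : ℝ)..(x - c), φ t) - ∫ t in (0 : ℝ)..(x + c), φ t := by
  funext x
  rw [tentIntegral, ← integral_interval_sub_left (hφ.intervalIntegrable 0 x)
    (hφ.intervalIntegrable 0 (x - c)), ← integral_interval_sub_left
    (hφ.intervalIntegrable 0 (x + c)) (hφ.intervalIntegrable 0 x)]
  linarith

theorem hasDerivAt_tentIntegral {φ : ℝ → ℝ} (hφ : Continuous φ) (c x : ℝ) :
    HasDerivAt (tentIntegral φ c) (2 * φ x - φ (x - c) - φ (x + c)) x := by
  have hΦ (y : ℝ) : HasDerivAt (fun u => ∫ t in (0 : ℝ)..u, φ t) (φ y) y :=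
    (hφ.integral_hasStrictDerivAt 0 y).hasDerivAt
  rw [tentIntegral_eq_primitive hφ]
  have hsub := (hΦ (x - c)).comp_sub_const x c
  have hadd := (hΦ (x + c)).comp_add_const x c
  exact (((hΦ x).const_mul 2).sub hsub).sub hadd

section VariationOfParameters

variable {ω : ℝ} {P Q g : ℝ → ℝ} {x : ℝ}

theorem hasDerivAt_sin_mul_sub_cos_mul (hP : HasDerivAt P (cos (ω * x) * g x) x)
    (hQ : HasDerivAt Q (sin (ω * x) * g x) x) :
    HasDerivAt (fun y => sin (ω * y) * P y - cos (ω * y) * Q y)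
      (ω * (cos (ω * x) * P x + sin (ω * x) * Q x)) x := by
  have hω := (hasDerivAt_id' x).const_mul ω
  refine ((hω.sin.mul hP).sub (hω.cos.mul hQ)).congr_deriv ?_
  ring

theorem hasDerivAt_cos_mul_add_sin_mul (hP : HasDerivAt P (cos (ω * x) * g x) x)
    (hQ : HasDerivAt Q (sin (ω * x) * g x) x) :
    HasDerivAt (fun y => cos (ω * y) * P y + sin (ω * y) * Q y)
      (g x - ω * (sin (ω * x) * P x - cos (ω * x) * Q x)) x := by
  have hω := (hasDerivAt_id' x).const_mul ω
  refine ((hω.cos.mul hP).add (hω.sin.mul hQ)).congr_deriv ?_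
  linear_combination g x * sin_sq_add_cos_sq (ω * x)

end VariationOfParameters

section SinKernel

variable {f : ℝ → ℝ} {ω c : ℝ}

theorem hasDerivAt_tentIntegral_cos_mul (hf : Continuous f) (hper : Function.Periodic f (2 * c))
    (hωc : ω * c = π / 2) (x : ℝ) :
    HasDerivAt (tentIntegral (fun t => cos (ω * t) * f t) c) (cos (ω * x) * (2 * f x)) x := by
  refine (hasDerivAt_tentIntegral (by fun_prop) c x).congr_deriv ?_
  have hshift : f (x + c) = f (x - c) := by simpa [two_mul, ← add_assoc] using hper (x - c)
  rw [show ω * (x - c) = ω * x - π / 2 by linear_combination -hωc,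
    show ω * (x + c) = ω * x + π / 2 by linear_combination hωc, cos_sub_pi_div_two,
    cos_add_pi_div_two, hshift]
  ring

theorem hasDerivAt_tentIntegral_sin_mul (hf : Continuous f) (hper : Function.Periodic f (2 * c))
    (hωc : ω * c = π / 2) (x : ℝ) :
    HasDerivAt (tentIntegral (fun t => sin (ω * t) * f t) c) (sin (ω * x) * (2 * f x)) x := by
  refine (hasDerivAt_tentIntegral (by fun_prop) c x).congr_deriv ?_
  have hshift : f (x + c) = f (x - c) := by simpa [two_mul, ← add_assoc] using hper (x - c)
  rw [show ω * (x - c) = ω * x - π / 2 by linear_combination -hωc,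
    show ω * (x + c) = ω * x + π / 2 by linear_combination hωc, sin_sub_pi_div_two,
    sin_add_pi_div_two, hshift]
  ring

theorem integral_sin_mul_sub_mul (ω θ : ℝ) {a b : ℝ} (hf : IntervalIntegrable f volume a b) :
    ∫ t in a..b, sin (ω * (θ - t)) * f t =
      sin (ω * θ) * (∫ t in a..b, cos (ω * t) * f t) -
        cos (ω * θ) * ∫ t in a..b, sin (ω * t) * f t := by
  have hcos := hf.continuousOn_mul (by fun_prop : Continuous fun t => cos (ω * t)).continuousOn
  have hsin := hf.continuousOn_mul (by fun_prop : Continuous fun t => sin (ω * t)).continuousOn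
  rw [← intervalIntegral.integral_const_mul, ← intervalIntegral.integral_const_mul,
    ← intervalIntegral.integral_sub (hcos.const_mul _) (hsin.const_mul _)]
  congr 1 with t
  rw [mul_sub, sin_sub]
  ring

theorem integral_abs_sin_mul_eq_tentIntegral (hf : Continuous f) (hω : 0 ≤ ω) (hc : 0 ≤ c)
    (hωc : ω * c ≤ π) (θ : ℝ) :
    ∫ t in (θ - c)..(θ + c), |sin (ω * (θ - t))| * f t =
      sin (ω * θ) * tentIntegral (fun t => cos (ω * t) * f t) c θ -
        cos (ω * θ) * tentIntegral (fun t => sin (ω * t) * f t) c θ := by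
  have hint : Continuous fun t => |sin (ω * (θ - t))| * f t := by fun_prop
  have hleft : ∫ t in (θ - c)..θ, |sin (ω * (θ - t))| * f t =
      ∫ t in (θ - c)..θ, sin (ω * (θ - t)) * f t := by
    refine integral_congr fun t ht => ?_
    rw [Set.uIcc_of_le (by linarith)] at ht
    rw [abs_of_nonneg (sin_nonneg_of_nonneg_of_le_pi (by nlinarith [ht.2]) (by nlinarith [ht.1]))]
  have hright : ∫ t in θ..(θ + c), |sin (ω * (θ - t))| * f t =
      -∫ t in θ..(θ + c), sin (ω * (θ - t)) * f t := by
    rw [← intervalIntegral.integral_neg]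
    refine integral_congr fun t ht => ?_
    rw [Set.uIcc_of_le (by linarith)] at ht
    rw [abs_of_nonpos (sin_nonpos_of_nonpos_of_neg_pi_le (by nlinarith [ht.1])
      (by nlinarith [ht.2])), neg_mul]
  rw [← integral_add_adjacent_intervals (hint.intervalIntegrable _ θ)
      (hint.intervalIntegrable θ _),
    hleft, hright, integral_sin_mul_sub_mul ω θ (hf.intervalIntegrable _ _),
    integral_sin_mul_sub_mul ω θ (hf.intervalIntegrable _ _), tentIntegral, tentIntegral]
  ring

end SinKernel

/-- If `h : ℝ → ℝ` is continuous and periodic with period `π/2`, and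
`H θ = (1/4) ∫_{-π/4}^{π/4} |sin(2(θ - θ'))| h(θ') dθ'`, then `H` is twice
differentiable and `4 H(θ) + H''(θ) = h(θ)` for every `θ`. -/
theorem kernel_solves_elliptic_ode
    (h : ℝ → ℝ) (hcont : Continuous h)
    (hper : ∀ θ : ℝ, h (θ + π / 2) = h θ)
    (H : ℝ → ℝ)
    (hH : ∀ θ : ℝ, H θ =
      (1 / 4) * ∫ θ' in (-(π / 4))..(π / 4), |Real.sin (2 * (θ - θ'))| * h θ') :
    ∀ θ : ℝ, DifferentiableAt ℝ H θ ∧ DifferentiableAt ℝ (deriv H) θ ∧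
      4 * H θ + deriv (deriv H) θ = h θ := by
  have hωc : 2 * (π / 4) = π / 2 := by ring
  have hper' : Function.Periodic h (2 * (π / 4)) := hωc ▸ hper
  set P := tentIntegral (fun t => cos (2 * t) * h t) (π / 4)
  set Q := tentIntegral (fun t => sin (2 * t) * h t) (π / 4)
  have hP (x : ℝ) : HasDerivAt P (cos (2 * x) * (2 * h x)) x :=
    hasDerivAt_tentIntegral_cos_mul hcont hper' hωc x
  have hQ (x : ℝ) : HasDerivAt Q (sin (2 * x) * (2 * h x)) x :=
    hasDerivAt_tentIntegral_sin_mul hcont hper' hωc x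
  have hH_eq : H = fun x => (1 / 4) * (sin (2 * x) * P x - cos (2 * x) * Q x) := by
    funext θ
    have hkernel : Function.Periodic (fun t => |sin (2 * (θ - t))| * h t) (π / 2) := fun t => by
      dsimp only
      rw [show 2 * (θ - (t + π / 2)) = 2 * (θ - t) - π by ring, sin_sub_pi, abs_neg, hper t]
    have hshift := hkernel.intervalIntegral_add_eq (-(π / 4)) (θ - π / 4)
    rw [show -(π / 4) + π / 2 = π / 4 by ring,
      show θ - π / 4 + π / 2 = θ + π / 4 by ring] at hshift
    rw [hH θ, hshift, integral_abs_sin_mul_eq_tentIntegral hcont zero_le_two (by positivity)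
      (by linarith [pi_pos])]
  have hH1 (x : ℝ) : HasDerivAt H ((1 / 2) * (cos (2 * x) * P x + sin (2 * x) * Q x)) x := by
    rw [hH_eq]
    exact ((hasDerivAt_sin_mul_sub_cos_mul (g := fun y => 2 * h y) (hP x) (hQ x)).const_mul
      (1 / 4)).congr_deriv (by ring)
  have hH2 (x : ℝ) : HasDerivAt (deriv H) (h x - 4 * H x) x := by
    rw [show deriv H = _ from funext fun y => (hH1 y).deriv, hH_eq]
    exact ((hasDerivAt_cos_mul_add_sin_mul (g := fun y => 2 * h y) (hP x) (hQ x)).const_mul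
      (1 / 2)).congr_deriv (by ring)
  intro θ
  exact ⟨(hH1 θ).differentiableAt, (hH2 θ).differentiableAt, by rw [(hH2 θ).deriv]; ring⟩
end

section
/- For every ξ with 0 ≤ ξ ≤ π/8, the values ζ_1 = π/8 + ξ, ζ_2 = π/8 - ξ, γ = π/8, A_1 = sin(π/8 - ξ)·cos(π/4 - ξ), A_2 = sin(π/8 + ξ)·cos(π/4 + ξ) satisfy 2γ + ζ_1 + ζ_2 = π/2 and A_1 sin(ζ_1) cos(γ + ζ_1) = A_2 sin(ζ_2) cos(γ + ζ_2). -/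
open Real

/-- an explicit one-parameter family of stationary (rotating)
two-sector configurations. -/
theorem explicit_rotating_family (ξ : ℝ) (hξ0 : 0 ≤ ξ) (hξ : ξ ≤ π / 8) :
    (2 * (π / 8) + (π / 8 + ξ) + (π / 8 - ξ) = π / 2) ∧
    (Real.sin (π / 8 - ξ) * Real.cos (π / 4 - ξ)) * Real.sin (π / 8 + ξ) *
        Real.cos (π / 8 + (π / 8 + ξ)) =
      (Real.sin (π / 8 + ξ) * Real.cos (π / 4 + ξ)) * Real.sin (π / 8 - ξ) *
        Real.cos (π / 8 + (π / 8 - ξ)) := by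
  refine ⟨by ring, ?_⟩
  rw [show π / 8 + (π / 8 + ξ) = π / 4 + ξ by ring,
      show π / 8 + (π / 8 - ξ) = π / 4 - ξ by ring]
  ring
end

section
/- Let N ≥ 1 and let I_1, …, I_N be pairwise disjoint nondegenerate closed intervals contained in [-π/8, π/8], with union 𝓘 = I_1 ∪ ⋯ ∪ I_N. Define H : ℝ → ℝ by H(θ) = ∫_𝓘 |sin(2(θ - θ'))| dθ'. If H takes the same value at all 2N endpoints of the intervals I_1, …, I_N, then N = 1, i.e., 𝓘 is a single interval. -/
/-!
Let `I_m = [a_m, b_m]` be the leftmost interval and compare `H` at its two endpoints. The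
contribution of `I_m` itself is the same at both, by the reflection `t ↦ a_m + b_m - t` and the
evenness of `|sin 2x|`. Every other interval lies to the right of `b_m` and within `π / 4` of
`a_m`, where `|sin (2(θ - t))|` strictly decreases as `θ` moves towards `t`. Hence a second
interval would force `H(b_m) < H(a_m)`.
-/

open Real MeasureTheory Set

theorem setIntegral_Icc_comp_sub_left_of_even {f : ℝ → ℝ} (hf : f.Even)
    (a b : ℝ) : ∫ t in Icc a b, f (a - t) = ∫ t in Icc a b, f (b - t) := by
  rcases le_or_gt a b with hab | hba
  · rw [integral_Icc_eq_integral_Ioc, integral_Icc_eq_integral_Ioc,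
      ← intervalIntegral.integral_of_le hab, ← intervalIntegral.integral_of_le hab]
    have hreflect := intervalIntegral.integral_comp_sub_left (a := a) (b := b)
      (fun t => f (b - t)) (a + b)
    rw [add_sub_cancel_right, add_sub_cancel_left] at hreflect
    rw [← hreflect]
    congr 1 with t
    rw [← hf]
    ring_nf
  · simp [Icc_eq_empty_of_lt hba]

theorem Real.even_abs_sin_two_mul : (fun x : ℝ => |sin (2 * x)|).Even := fun x => by
  simp [mul_neg, sin_neg]

theorem Real.abs_sin_two_mul_sub_lt {θ₁ θ₂ t : ℝ} (h₁₂ : θ₁ < θ₂) (h₂t : θ₂ ≤ t)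
    (ht : t ≤ θ₁ + π / 4) : |sin (2 * (θ₂ - t))| < |sin (2 * (θ₁ - t))| := by
  have hπ := pi_pos
  have habs (θ : ℝ) (hθ : θ ≤ t) (ht' : t - θ ≤ π / 2) :
      |sin (2 * (θ - t))| = sin (2 * (t - θ)) := by
    rw [show 2 * (θ - t) = -(2 * (t - θ)) by ring, sin_neg, abs_neg,
      abs_of_nonneg (sin_nonneg_of_nonneg_of_le_pi (by linarith) (by linarith))]
  rw [habs θ₂ h₂t (by linarith), habs θ₁ (by linarith) (by linarith)]
  exact strictMonoOn_sin ⟨by linarith, by linarith⟩ ⟨by linarith, by linarith⟩ (by linarith)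

theorem Real.setIntegral_abs_sin_two_mul_sub_lt {θ₁ θ₂ u v : ℝ} (h₁₂ : θ₁ < θ₂) (h₂u : θ₂ ≤ u)
    (huv : u < v) (hv : v ≤ θ₁ + π / 4) :
    ∫ t in Icc u v, |sin (2 * (θ₂ - t))| < ∫ t in Icc u v, |sin (2 * (θ₁ - t))| := by
  rw [integral_Icc_eq_integral_Ioc, integral_Icc_eq_integral_Ioc,
    ← intervalIntegral.integral_of_le huv.le, ← intervalIntegral.integral_of_le huv.le]
  refine intervalIntegral.integral_lt_integral_of_continuousOn_of_le_of_exists_lt huv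
    (by fun_prop) (by fun_prop) (fun t ht => ?_) ⟨u, left_mem_Icc.2 huv.le, ?_⟩
  · exact (abs_sin_two_mul_sub_lt h₁₂ (by linarith [ht.1]) (by linarith [ht.2])).le
  · exact abs_sin_two_mul_sub_lt h₁₂ h₂u (by linarith)

theorem Set.lt_of_disjoint_Icc {α : Type*} [LinearOrder α] {a₁ b₁ a₂ b₂ : α} (h : Disjoint (Icc a₁ b₁) (Icc a₂ b₂))
    (ha : a₁ ≤ a₂) (hab₂ : a₂ ≤ b₂) : b₁ < a₂ :=
  lt_of_not_ge fun hba => disjoint_left.1 h ⟨ha, hba⟩ (left_mem_Icc.2 hab₂)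

/-- a rotating union of sectors supported in `[-π/8, π/8]` must be a
single sector: if `H(θ) = ∫_𝓘 |sin(2(θ-θ'))| dθ'` takes the same value at all
endpoints of the pairwise disjoint nondegenerate intervals `I_1, …, I_N ⊆ [-π/8, π/8]`,
then `N = 1`. -/
theorem rotating_sector_classification
    (N : ℕ) (hN : 1 ≤ N) (a b : Fin N → ℝ)
    (hab : ∀ i, a i < b i)
    (hsub : ∀ i, Set.Icc (a i) (b i) ⊆ Set.Icc (-(π / 8)) (π / 8))
    (hdisj : Pairwise (Function.onFun Disjoint fun i => Set.Icc (a i) (b i)))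
    (H : ℝ → ℝ)
    (hH : ∀ θ : ℝ, H θ =
      ∫ θ' in (⋃ i, Set.Icc (a i) (b i)), |Real.sin (2 * (θ - θ'))|)
    (c : ℝ) (hc : ∀ i, H (a i) = c ∧ H (b i) = c) :
    N = 1 := by
  by_contra hN1
  have : Nontrivial (Fin N) := Fin.nontrivial_iff_two_le.2 (by omega)
  obtain ⟨m, hm⟩ := Finite.exists_min a
  obtain ⟨i₀, hi₀⟩ := exists_ne m
  have hH_sum (θ : ℝ) : H θ = ∑ i, ∫ t in Icc (a i) (b i), |sin (2 * (θ - t))| := by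
    rw [hH, integral_iUnion_fintype (fun _ => measurableSet_Icc) hdisj
      fun _ => (by fun_prop : Continuous _).integrableOn_Icc]
  have hfar (i : Fin N) (hi : i ≠ m) :
      ∫ t in Icc (a i) (b i), |sin (2 * (b m - t))| <
        ∫ t in Icc (a i) (b i), |sin (2 * (a m - t))| :=
    setIntegral_abs_sin_two_mul_sub_lt (hab m)
      (lt_of_disjoint_Icc (hdisj hi.symm) (hm i) (hab i).le).le (hab i)
      (by linarith [(hsub i (right_mem_Icc.2 (hab i).le)).2,
        (hsub m (left_mem_Icc.2 (hab m).le)).1])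
  have hdrop : H (b m) < H (a m) := by
    rw [hH_sum, hH_sum]
    refine Finset.sum_lt_sum (fun i _ => ?_) ⟨i₀, Finset.mem_univ _, hfar i₀ hi₀⟩
    rcases eq_or_ne i m with rfl | hi
    · exact (setIntegral_Icc_comp_sub_left_of_even even_abs_sin_two_mul (a i) (b i)).ge
    · exact (hfar i hi).le
  exact hdrop.ne (by rw [(hc m).1, (hc m).2])
end

section
/- Let 0 < ε < π/8 and let 𝓘 = [-π/8 - ε, -π/8 + ε] ∪ [π/8 - ε, π/8 + ε]. Define H : ℝ → ℝ by H(θ) = ∫_𝓘 |sin(2(θ - θ'))| dθ'. Then H(-π/8 - ε) = H(-π/8 + ε) = H(π/8 - ε) = H(π/8 + ε). -/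
/-!
Substituting `u = θ - θ'` turns `H θ` into `W (θ + π/8) + W (θ - π/8)`, where `W t` integrates
`|sin 2u|` over the window `[t - ε, t + ε]`. Since `|sin 2u|` is invariant under `u ↦ -u` and
`u ↦ π/2 - u`, so is `W`, and these two reflections bring the value of `H` at each of the four
endpoints to `W ε + W (π/4 + ε)`.
-/

open Real MeasureTheory

noncomputable def windowIntegral (f : ℝ → ℝ) (ε t : ℝ) : ℝ :=
  ∫ u in t - ε..t + ε, f u

theorem windowIntegral_reflect {f : ℝ → ℝ} {c : ℝ} (hf : ∀ u, f (c - u) = f u) (ε t : ℝ) :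
    windowIntegral f ε (c - t) = windowIntegral f ε t := by
  have h := intervalIntegral.integral_comp_sub_left f (a := t - ε) (b := t + ε) c
  simp only [hf] at h
  rw [windowIntegral, windowIntegral, h]
  congr 1 <;> ring

theorem setIntegral_Icc_comp_sub_eq_windowIntegral (f : ℝ → ℝ) {ε : ℝ} (hε : 0 ≤ ε)
    (θ c : ℝ) :
    ∫ x in Set.Icc (c - ε) (c + ε), f (θ - x) = windowIntegral f ε (θ - c) := by
  rw [integral_Icc_eq_integral_Ioc, ← intervalIntegral.integral_of_le (by linarith),
    intervalIntegral.integral_comp_sub_left, windowIntegral]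
  congr 1 <;> ring

/-- sharpness of the support condition: for
`𝓘 = [-π/8-ε, -π/8+ε] ∪ [π/8-ε, π/8+ε]` with `0 < ε < π/8`, the function
`H(θ) = ∫_𝓘 |sin(2(θ-θ'))| dθ'` takes the same value at all four endpoints. -/
theorem two_sector_rotating_solution (ε : ℝ) (hε0 : 0 < ε) (hε : ε < π / 8)
    (H : ℝ → ℝ)
    (hH : ∀ θ : ℝ, H θ =
      ∫ θ' in (Set.Icc (-(π / 8) - ε) (-(π / 8) + ε) ∪
        Set.Icc (π / 8 - ε) (π / 8 + ε)), |Real.sin (2 * (θ - θ'))|) :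
    H (-(π / 8) - ε) = H (-(π / 8) + ε) ∧
    H (-(π / 8) + ε) = H (π / 8 - ε) ∧
    H (π / 8 - ε) = H (π / 8 + ε) := by
  set f : ℝ → ℝ := fun u ↦ |sin (2 * u)|
  set W := windowIntegral f ε
  have hW : ∀ θ, H θ = W (θ - -(π / 8)) + W (θ - π / 8) := by
    intro θ
    have hf : Continuous fun x ↦ f (θ - x) := by fun_prop
    have hdisj : Disjoint (Set.Icc (-(π / 8) - ε) (-(π / 8) + ε))
        (Set.Icc (π / 8 - ε) (π / 8 + ε)) :=
      Set.disjoint_left.2 fun x hx hx' ↦ by linarith [hx.2, hx'.1]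
    rw [hH θ, setIntegral_union hdisj measurableSet_Icc hf.integrableOn_Icc hf.integrableOn_Icc,
      setIntegral_Icc_comp_sub_eq_windowIntegral f hε0.le,
      setIntegral_Icc_comp_sub_eq_windowIntegral f hε0.le]
  have hneg : ∀ t, W (0 - t) = W t :=
    windowIntegral_reflect (fun u ↦ by simp [f]) ε
  have hpi_div_two : ∀ t, W (π / 2 - t) = W t :=
    windowIntegral_reflect (fun u ↦ by simp [f, mul_sub, mul_div_cancel₀]) ε
  have h₁ : H (-(π / 8) - ε) = W ε + W (π / 4 + ε) := by
    rw [hW, ← hneg ε, ← hneg (π / 4 + ε)]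
    congr 2 <;> ring
  have h₂ : H (-(π / 8) + ε) = W ε + W (π / 4 + ε) := by
    rw [hW, ← hpi_div_two (π / 4 + ε), ← hneg (π / 2 - (π / 4 + ε))]
    congr 2 <;> ring
  have h₃ : H (π / 8 - ε) = W ε + W (π / 4 + ε) := by
    rw [hW, ← hneg ε, ← hpi_div_two (π / 4 + ε), add_comm]
    congr 2 <;> ring
  have h₄ : H (π / 8 + ε) = W ε + W (π / 4 + ε) := by
    rw [hW, add_comm]
    congr 2 <;> ring
  exact ⟨h₁.trans h₂.symm, h₂.trans h₃.symm, h₃.trans h₄.symm⟩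
end

section
/- Let ζ_1, ζ_2, γ ∈ (0, π/2) satisfy γ + ζ_1 + ζ_2 < π/2. Then the three quantities -sin(ζ_1) sin(ζ_2) cos(2γ + ζ_1 + ζ_2), sin(ζ_2) sin(ζ_1) cos(2γ + ζ_1 + ζ_2), and sin(γ) sin(ζ_1 - ζ_2) cos(γ + ζ_1 + ζ_2) all vanish if and only if ζ_1 = ζ_2 and γ = π/4 - ζ_1. -/
open Real

/-- the only nondegenerate equilibrium of the two-sector angle dynamics
is the 8-fold symmetric configuration `ζ₁ = ζ₂`, `γ = π/4 - ζ₁`. -/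
theorem equilibrium_characterization
    (ζ₁ ζ₂ γ : ℝ)
    (hζ₁ : ζ₁ ∈ Set.Ioo 0 (π / 2)) (hζ₂ : ζ₂ ∈ Set.Ioo 0 (π / 2))
    (hγ : γ ∈ Set.Ioo 0 (π / 2)) (hsum : γ + ζ₁ + ζ₂ < π / 2) :
    (-Real.sin ζ₁ * Real.sin ζ₂ * Real.cos (2 * γ + ζ₁ + ζ₂) = 0 ∧
     Real.sin ζ₂ * Real.sin ζ₁ * Real.cos (2 * γ + ζ₁ + ζ₂) = 0 ∧
     Real.sin γ * Real.sin (ζ₁ - ζ₂) * Real.cos (γ + ζ₁ + ζ₂) = 0) ↔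
    (ζ₁ = ζ₂ ∧ γ = π / 4 - ζ₁) := by
  obtain ⟨h1, h1'⟩ := hζ₁
  obtain ⟨h2, h2'⟩ := hζ₂
  obtain ⟨h3, h3'⟩ := hγ
  have hpi := Real.pi_pos
  have hs1 : Real.sin ζ₁ ≠ 0 := ne_of_gt (Real.sin_pos_of_pos_of_lt_pi h1 (by linarith))
  have hs2 : Real.sin ζ₂ ≠ 0 := ne_of_gt (Real.sin_pos_of_pos_of_lt_pi h2 (by linarith))
  have hs3 : Real.sin γ ≠ 0 := ne_of_gt (Real.sin_pos_of_pos_of_lt_pi h3 (by linarith))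
  have hc : Real.cos (γ + ζ₁ + ζ₂) ≠ 0 := by
    apply ne_of_gt
    apply Real.cos_pos_of_mem_Ioo
    constructor <;> [linarith; linarith]
  constructor
  · rintro ⟨e1, e2, e3⟩
    have hcz : Real.cos (2 * γ + ζ₁ + ζ₂) = 0 := by
      rcases mul_eq_zero.1 e2 with h | h
      · exact absurd (mul_eq_zero.1 h) (by simp [hs1, hs2])
      · exact h
    have hsd : Real.sin (ζ₁ - ζ₂) = 0 := by
      rcases mul_eq_zero.1 e3 with h | h
      · rcases mul_eq_zero.1 h with h | h
        · exact absurd h hs3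
        · exact h
      · exact absurd h hc
    have heq : ζ₁ = ζ₂ := by
      have := (Real.sin_eq_zero_iff_of_lt_of_lt (by linarith) (by linarith)).1 hsd
      linarith
    refine ⟨heq, ?_⟩
    -- cos (2γ+ζ₁+ζ₂) = 0, with argument in (0, π), so it equals π/2
    have hmem : 2 * γ + ζ₁ + ζ₂ ∈ Set.Icc 0 π := by
      constructor <;> [linarith; linarith]
    have : 2 * γ + ζ₁ + ζ₂ = π / 2 := by
      have h2m : (π / 2 : ℝ) ∈ Set.Icc 0 π := by constructor <;> linarith
      have := Real.injOn_cos hmem h2m (by rw [hcz, Real.cos_pi_div_two])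
      exact this
    linarith
  · rintro ⟨heq, hgam⟩
    have harg : 2 * γ + ζ₁ + ζ₂ = π / 2 := by rw [hgam, heq]; ring
    have hdiff : Real.sin (ζ₁ - ζ₂) = 0 := by rw [heq]; simp
    rw [harg, Real.cos_pi_div_two, hdiff]
    refine ⟨by ring, by ring, by ring⟩
end

section
/- Let ζ_1, ζ_2, γ : [0, ∞) → ℝ be differentiable functions satisfying the system dζ_1/dt = -sin(ζ_1) sin(ζ_2) cos(2γ + ζ_1 + ζ_2), dζ_2/dt = sin(ζ_2) sin(ζ_1) cos(2γ + ζ_1 + ζ_2), dγ/dt = sin(γ) sin(ζ_1 - ζ_2) cos(γ + ζ_1 + ζ_2), with initial data satisfying ζ_1(0) + ζ_2(0) = π/4 and γ(0) = ζ_2(0). Then for all t ≥ 0 one has ζ_1(t) + ζ_2(t) = π/4 and γ(t) = ζ_2(t); consequently γ satisfies the scalar ODE dγ/dt = sin(γ) sin(π/4 - 2γ) cos(γ + π/4). -/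
/-!
The sum `ζ₁ + ζ₂` is conserved, since the right-hand sides of its two equations cancel.
On the plane `ζ₁ + ζ₂ = π/4` the derivative of `γ - ζ₂` is a trigonometric expression in
`(ζ₂, γ)` that vanishes on the diagonal `γ = ζ₂` and is Lipschitz in `γ`, so it is bounded by
`3 |γ - ζ₂|`; Grönwall's inequality then forces `γ - ζ₂ ≡ 0`.
-/

open Real Set

theorem eq_zero_of_norm_deriv_le_mul_norm_self_on_Ici {E : Type*} [NormedAddCommGroup E]
    [NormedSpace ℝ E] {f f' : ℝ → E} {K a : ℝ}
    (hf : ∀ x ∈ Ici a, HasDerivWithinAt f (f' x) (Ici a) x) (ha : f a = 0)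
    (bound : ∀ x ∈ Ici a, ‖f' x‖ ≤ K * ‖f x‖) : ∀ x ∈ Ici a, f x = 0 := fun b hb =>
  eq_zero_of_abs_deriv_le_mul_abs_self_of_eq_zero_right
    (fun x hx => (hf x hx.1).continuousWithinAt.mono Icc_subset_Ici_self)
    (fun x hx => (hf x hx.1).mono (Ici_subset_Ici.2 hx.1)) ha (fun x hx => bound x hx.1)
    b ⟨hb, le_rfl⟩

theorem sin_mul_cos_add_pi_div_four (y : ℝ) :
    sin y * cos (y + π / 4) = (sin (2 * y + π / 4) - sin (π / 4)) / 2 := by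
  have h := two_mul_sin_mul_cos y (y + π / 4)
  rw [show y - (y + π / 4) = -(π / 4) by ring, show y + (y + π / 4) = 2 * y + π / 4 by ring,
    sin_neg] at h
  linarith

theorem sin_pi_div_four_sub_two_mul_mul_cos (a : ℝ) :
    sin (π / 4 - 2 * a) * cos (a + π / 4) = sin (π / 4 - a) * cos (2 * a + π / 4) := by
  have h₁ := two_mul_sin_mul_cos (π / 4 - 2 * a) (a + π / 4)
  have h₂ := two_mul_sin_mul_cos (π / 4 - a) (2 * a + π / 4)
  rw [show π / 4 - 2 * a + (a + π / 4) = π / 2 - a by ring, sin_pi_div_two_sub] at h₁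
  rw [show π / 4 - a + (2 * a + π / 4) = a + π / 2 by ring, sin_add_pi_div_two] at h₂
  rw [show π / 4 - 2 * a - (a + π / 4) = -(3 * a) by ring] at h₁
  rw [show π / 4 - a - (2 * a + π / 4) = -(3 * a) by ring] at h₂
  linarith

/-- The derivative of `γ - ζ₂` on the plane `ζ₁ + ζ₂ = π/4`, at `ζ₂ = a`, `γ = b`. -/
theorem abs_gap_drift_le (a b : ℝ) :
    |sin b * sin (π / 4 - 2 * a) * cos (b + π / 4)
        - sin a * sin (π / 4 - a) * cos (2 * b + π / 4)| ≤ 3 * |b - a| := by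
  have hdiag := sin_pi_div_four_sub_two_mul_mul_cos a
  have hsplit : sin b * sin (π / 4 - 2 * a) * cos (b + π / 4)
        - sin a * sin (π / 4 - a) * cos (2 * b + π / 4)
      = sin (π / 4 - 2 * a) / 2 * (sin (2 * b + π / 4) - sin (2 * a + π / 4))
        - sin a * sin (π / 4 - a) * (cos (2 * b + π / 4) - cos (2 * a + π / 4)) := by
    have hb := sin_mul_cos_add_pi_div_four b
    have ha := sin_mul_cos_add_pi_div_four a
    linear_combination sin (π / 4 - 2 * a) * hb - sin (π / 4 - 2 * a) * ha + sin a * hdiag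
  have hdist : |(2 * b + π / 4) - (2 * a + π / 4)| = 2 * |b - a| := by
    rw [show (2 * b + π / 4) - (2 * a + π / 4) = 2 * (b - a) by ring, abs_mul, abs_two]
  have hsin := (abs_sin_sub_sin_le (2 * b + π / 4) (2 * a + π / 4)).trans_eq hdist
  have hcos := (abs_cos_sub_cos_le (2 * b + π / 4) (2 * a + π / 4)).trans_eq hdist
  rw [hsplit]
  refine (abs_sub _ _).trans ?_
  calc |sin (π / 4 - 2 * a) / 2 * (sin (2 * b + π / 4) - sin (2 * a + π / 4))|
        + |sin a * sin (π / 4 - a) * (cos (2 * b + π / 4) - cos (2 * a + π / 4))|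
      ≤ 1 / 2 * (2 * |b - a|) + 1 * 1 * (2 * |b - a|) := by
        simp only [abs_mul, abs_div, abs_two]
        gcongr <;> exact abs_sin_le_one _
    _ = 3 * |b - a| := by ring

/-- the set `{ζ₁ + ζ₂ = π/4, γ = ζ₂}` is invariant under the two-sector
angle dynamics, and on it `γ` satisfies the reduced scalar ODE
`dγ/dt = sin(γ) sin(π/4 - 2γ) cos(γ + π/4)`. -/
theorem invariant_set_and_reduction
    (ζ₁ ζ₂ γ : ℝ → ℝ)
    (hζ₁ : ∀ t ∈ Set.Ici (0 : ℝ), HasDerivWithinAt ζ₁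
      (-Real.sin (ζ₁ t) * Real.sin (ζ₂ t) * Real.cos (2 * γ t + ζ₁ t + ζ₂ t))
      (Set.Ici (0 : ℝ)) t)
    (hζ₂ : ∀ t ∈ Set.Ici (0 : ℝ), HasDerivWithinAt ζ₂
      (Real.sin (ζ₂ t) * Real.sin (ζ₁ t) * Real.cos (2 * γ t + ζ₁ t + ζ₂ t))
      (Set.Ici (0 : ℝ)) t)
    (hγ : ∀ t ∈ Set.Ici (0 : ℝ), HasDerivWithinAt γ
      (Real.sin (γ t) * Real.sin (ζ₁ t - ζ₂ t) * Real.cos (γ t + ζ₁ t + ζ₂ t))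
      (Set.Ici (0 : ℝ)) t)
    (hinit_sum : ζ₁ 0 + ζ₂ 0 = π / 4)
    (hinit_γ : γ 0 = ζ₂ 0) :
    (∀ t ∈ Set.Ici (0 : ℝ), ζ₁ t + ζ₂ t = π / 4 ∧ γ t = ζ₂ t) ∧
    (∀ t ∈ Set.Ici (0 : ℝ), HasDerivWithinAt γ
      (Real.sin (γ t) * Real.sin (π / 4 - 2 * γ t) * Real.cos (γ t + π / 4))
      (Set.Ici (0 : ℝ)) t) := by
  have hsum : ∀ t ∈ Ici (0 : ℝ), ζ₁ t + ζ₂ t - π / 4 = 0 := by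
    refine eq_zero_of_norm_deriv_le_mul_norm_self_on_Ici (f' := fun _ => 0) (K := 0)
      (fun t ht => (((hζ₁ t ht).add (hζ₂ t ht)).sub_const (π / 4)).congr_deriv (by ring))
      (by simp [hinit_sum]) (fun t _ => by simp)
  have hζ₁_eq : ∀ t ∈ Ici (0 : ℝ), ζ₁ t = π / 4 - ζ₂ t := fun t ht => by linarith [hsum t ht]
  have hgap : ∀ t ∈ Ici (0 : ℝ), γ t - ζ₂ t = 0 := by
    refine eq_zero_of_norm_deriv_le_mul_norm_self_on_Ici (K := 3)
      (fun t ht => (hγ t ht).sub (hζ₂ t ht)) (by simp [hinit_γ]) (fun t ht => ?_)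
    rw [hζ₁_eq t ht, show π / 4 - ζ₂ t - ζ₂ t = π / 4 - 2 * ζ₂ t by ring,
      show γ t + (π / 4 - ζ₂ t) + ζ₂ t = γ t + π / 4 by ring,
      show 2 * γ t + (π / 4 - ζ₂ t) + ζ₂ t = 2 * γ t + π / 4 by ring]
    exact abs_gap_drift_le (ζ₂ t) (γ t)
  have hγ_eq : ∀ t ∈ Ici (0 : ℝ), γ t = ζ₂ t := fun t ht => sub_eq_zero.1 (hgap t ht)
  refine ⟨fun t ht => ⟨by linarith [hsum t ht], hγ_eq t ht⟩, fun t ht => ?_⟩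
  have h := hγ t ht
  rwa [hζ₁_eq t ht, ← hγ_eq t ht, show π / 4 - γ t - γ t = π / 4 - 2 * γ t by ring,
    show γ t + (π / 4 - γ t) + γ t = γ t + π / 4 by ring] at h
end

section
/- Let γ : [0, ∞) → ℝ be a differentiable function satisfying dγ/dt = sin(γ) sin(π/4 - 2γ) cos(γ + π/4) with 0 < γ(0) < π/4. Then 0 < γ(t) < π/4 for all t ≥ 0, and γ(t) → π/8 as t → ∞. -/
/-!
With `θ = 2 (γ - π/8)` the vector field reads `-(sin θ (cos θ - cos (π/4))) / 2`, so on any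
band `|γ - π/8| ≤ r < π/8` it contracts towards `π/8`: `(γ - π/8) γ' ≤ -κ (γ - π/8)²` with
`κ > 0`, by Jordan's inequality. A fence argument with the barrier `r² e^{-κ t}` then shows at once
that `(γ - π/8)²` never leaves the band and decays exponentially.
-/

open Real Filter Set Topology

section Contracting

variable {y F : ℝ → ℝ} {c r κ : ℝ}

theorem sq_sub_le_mul_exp_of_contracting (hr : 0 < r) (hκ : 0 < κ)
    (hy : ∀ t ∈ Ici (0 : ℝ), HasDerivWithinAt y (F (y t)) (Ici 0) t)
    (hF : ∀ x, |x - c| ≤ r → (x - c) * F x ≤ -κ * (x - c) ^ 2) (h0 : |y 0 - c| ≤ r) :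
    ∀ t ∈ Ici (0 : ℝ), (y t - c) ^ 2 ≤ r ^ 2 * exp (-κ * t) := by
  intro t ht
  have hv : ∀ s ∈ Ici (0 : ℝ), HasDerivWithinAt (fun s => (y s - c) ^ 2)
      (2 * (y s - c) * F (y s)) (Ici 0) s := fun s hs => by
    simpa using ((hy s hs).sub_const c).fun_pow 2
  have hB : ∀ s, HasDerivAt (fun s => r ^ 2 * exp (-κ * s)) (-κ * (r ^ 2 * exp (-κ * s))) s :=
    fun s => by
      simpa [mul_comm, mul_left_comm] using
        (((hasDerivAt_id s).const_mul (-κ)).exp).const_mul (r ^ 2)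
  have hv0 : (y 0 - c) ^ 2 ≤ r ^ 2 * exp (-κ * 0) := by
    simpa using sq_le_sq' (abs_le.1 h0).1 (abs_le.1 h0).2
  -- The barrier decays at rate `κ` while `hF` gives rate `2κ`: this makes the fence strict.
  refine image_le_of_deriv_right_lt_deriv_boundary
    (fun s hs => (hv s hs.1).continuousWithinAt.mono Icc_subset_Ici_self)
    (fun s hs => (hv s hs.1).mono (Ici_subset_Ici.2 hs.1)) hv0 hB ?_ ⟨ht, le_rfl⟩
  intro s hs hvB
  have hexp : exp (-κ * s) ≤ 1 := exp_le_one_iff.2 (by nlinarith [hs.1])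
  have hband : |y s - c| ≤ r :=
    abs_le_of_sq_le_sq (hvB.le.trans (mul_le_of_le_one_right (sq_nonneg r) hexp)) hr.le
  have hpos : 0 < κ * (r ^ 2 * exp (-κ * s)) := by positivity
  have hcontract := hF (y s) hband
  rw [hvB] at hcontract
  linarith

theorem abs_sub_le_of_contracting (hr : 0 < r) (hκ : 0 < κ)
    (hy : ∀ t ∈ Ici (0 : ℝ), HasDerivWithinAt y (F (y t)) (Ici 0) t)
    (hF : ∀ x, |x - c| ≤ r → (x - c) * F x ≤ -κ * (x - c) ^ 2) (h0 : |y 0 - c| ≤ r) :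
    ∀ t ∈ Ici (0 : ℝ), |y t - c| ≤ r := fun t ht =>
  abs_le_of_sq_le_sq ((sq_sub_le_mul_exp_of_contracting hr hκ hy hF h0 t ht).trans
    (mul_le_of_le_one_right (sq_nonneg r) (exp_le_one_iff.2 (by nlinarith [mem_Ici.1 ht])))) hr.le

theorem tendsto_of_contracting (hr : 0 < r) (hκ : 0 < κ)
    (hy : ∀ t ∈ Ici (0 : ℝ), HasDerivWithinAt y (F (y t)) (Ici 0) t)
    (hF : ∀ x, |x - c| ≤ r → (x - c) * F x ≤ -κ * (x - c) ^ 2) (h0 : |y 0 - c| ≤ r) :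
    Tendsto y atTop (𝓝 c) := by
  have hbarrier : Tendsto (fun t => r ^ 2 * exp (-κ * t)) atTop (𝓝 0) := by
    simpa [neg_mul] using
      (tendsto_exp_neg_atTop_nhds_zero.comp (tendsto_id.const_mul_atTop hκ)).const_mul (r ^ 2)
  have hsq : Tendsto (fun t => (y t - c) ^ 2) atTop (𝓝 0) :=
    squeeze_zero' (.of_forall fun t => sq_nonneg _)
      ((eventually_ge_atTop 0).mono (sq_sub_le_mul_exp_of_contracting hr hκ hy hF h0)) hbarrier
  have habs : Tendsto (fun t => |y t - c|) atTop (𝓝 0) := by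
    simpa [sqrt_sq_eq_abs] using hsq.sqrt
  exact tendsto_sub_nhds_zero_iff.1 ((tendsto_zero_iff_abs_tendsto_zero _).2 habs)

end Contracting

theorem two_div_pi_mul_sq_le_mul_sin {θ : ℝ} (hθ : |θ| ≤ π / 2) : 2 / π * θ ^ 2 ≤ θ * sin θ := by
  rcases le_total 0 θ with hpos | hneg
  · have := mul_le_sin hpos (by rwa [abs_of_nonneg hpos] at hθ)
    nlinarith
  · have := mul_le_sin (neg_nonneg.2 hneg) (by rwa [abs_of_nonpos hneg] at hθ)
    rw [sin_neg] at this
    nlinarith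

noncomputable def reducedField (x : ℝ) : ℝ := sin x * sin (π / 4 - 2 * x) * cos (x + π / 4)

theorem reducedField_eq (x : ℝ) :
    reducedField x = -(sin (2 * (x - π / 8)) * (cos (2 * (x - π / 8)) - cos (π / 4))) / 2 := by
  have hprod : sin (x + (x + π / 4)) + sin (x - (x + π / 4)) = 2 * sin x * cos (x + π / 4) := by
    rw [sin_add, sin_sub]; ring
  have hsum : x + (x + π / 4) = 2 * (x - π / 8) + π / 2 := by ring
  have hdiff : x - (x + π / 4) = -(π / 4) := by ring
  have hfirst : π / 4 - 2 * x = -(2 * (x - π / 8)) := by ring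
  rw [hsum, hdiff, sin_add_pi_div_two, sin_neg, sin_pi_div_four, ← cos_pi_div_four] at hprod
  rw [reducedField, hfirst, sin_neg]
  linear_combination sin (2 * (x - π / 8)) / 2 * hprod

theorem sub_mul_reducedField_le {r x : ℝ} (hr : r ≤ π / 8) (hx : |x - π / 8| ≤ r) :
    (x - π / 8) * reducedField x ≤ -(2 / π * (cos (2 * r) - cos (π / 4))) * (x - π / 8) ^ 2 := by
  set θ := 2 * (x - π / 8) with hθ
  have hθr : |θ| ≤ 2 * r := by rw [hθ, abs_mul, abs_two]; linarith
  have hr0 : 0 ≤ r := (abs_nonneg _).trans hx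
  have hjordan : 2 / π * θ ^ 2 ≤ θ * sin θ := two_div_pi_mul_sq_le_mul_sin (by linarith)
  have hcos : cos (2 * r) ≤ cos θ := by
    rw [← cos_abs θ]; exact cos_le_cos_of_nonneg_of_le_pi (abs_nonneg θ) (by linarith) hθr
  have hgap : 0 ≤ cos (2 * r) - cos (π / 4) :=
    sub_nonneg.2 (cos_le_cos_of_nonneg_of_le_pi (by linarith) (by linarith) (by linarith))
  have key := mul_le_mul hjordan (sub_le_sub_right hcos (cos (π / 4))) hgap
    ((by positivity : (0 : ℝ) ≤ 2 / π * θ ^ 2).trans hjordan)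
  calc (x - π / 8) * reducedField x = -(θ * sin θ * (cos θ - cos (π / 4))) / 4 := by
        rw [reducedField_eq, hθ]; ring
    _ ≤ -(2 / π * θ ^ 2 * (cos (2 * r) - cos (π / 4))) / 4 := by linarith
    _ = _ := by rw [hθ]; ring

/-- for the reduced ODE `dγ/dt = sin(γ) sin(π/4 - 2γ) cos(γ + π/4)` with
`0 < γ(0) < π/4`, the solution stays in `(0, π/4)` and converges to `π/8`. -/
theorem reduced_ode_converges_to_eight_fold
    (γ : ℝ → ℝ)
    (hode : ∀ t ∈ Set.Ici (0 : ℝ), HasDerivWithinAt γ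
      (Real.sin (γ t) * Real.sin (π / 4 - 2 * γ t) * Real.cos (γ t + π / 4))
      (Set.Ici (0 : ℝ)) t)
    (h0 : 0 < γ 0) (h1 : γ 0 < π / 4) :
    (∀ t ∈ Set.Ici (0 : ℝ), 0 < γ t ∧ γ t < π / 4) ∧
    Filter.Tendsto γ Filter.atTop (nhds (π / 8)) := by
  have hode' : ∀ t ∈ Ici (0 : ℝ), HasDerivWithinAt γ (reducedField (γ t)) (Ici 0) t := hode
  have hdist : |γ 0 - π / 8| < π / 8 := abs_sub_lt_iff.2 ⟨by linarith, by linarith⟩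
  obtain ⟨r, hγ0, hrπ⟩ := exists_between hdist
  have hr : 0 < r := (abs_nonneg _).trans_lt hγ0
  have hκ : 0 < 2 / π * (cos (2 * r) - cos (π / 4)) :=
    mul_pos (by positivity) (sub_pos.2 (cos_lt_cos_of_nonneg_of_le_pi_div_two (by linarith)
      (by linarith [pi_pos]) (by linarith)))
  have hcontract := fun x (hx : |x - π / 8| ≤ r) => sub_mul_reducedField_le hrπ.le hx
  refine ⟨fun t ht => ?_, tendsto_of_contracting hr hκ hode' hcontract hγ0.le⟩
  have hband := abs_le.1 (abs_sub_le_of_contracting hr hκ hode' hcontract hγ0.le t ht)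
  constructor <;> linarith
end

section
/- Let γ : [0, ∞) → ℝ be a differentiable function satisfying dγ/dt = -sin(γ) sin(π/4 - 2γ) cos(γ + π/4) with 0 < γ(0) < π/4. Then 0 < γ(t) < π/4 for all t ≥ 0, and: (a) if γ(0) < π/8 then γ is decreasing, γ(t) → 0 as t → ∞, and moreover there exists a constant c > 0 (depending on γ(0)) such that γ(t) ≤ γ(0)·e^{-ct} for all t ≥ 0; (b) if γ(0) > π/8 then γ(t) → π/4 as t → ∞; (c) if γ(0) = π/8 then γ(t) = π/8 for all t. -/
open Real Filter Set

/-! The interval `(0, π/4)` has the equilibria `0`, `π/8`, `π/4` of the field as its endpoints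
and midpoint. Near each equilibrium `a` the field is bounded by a multiple of `|x - a|`, so by Grönwall no
solution reaches an equilibrium in finite time, forwards or backwards; by the intermediate value
theorem a solution therefore never leaves the gap between equilibria it starts in. The field is
negative on `(0, π/8)`, and there `sin x ≥ 2x/π` while the two other factors are bounded below
along the (decreasing) solution, which gives `γ' ≤ -c γ` and exponential decay. The reflection
`x ↦ π/4 - x` reverses the sign of the field, which turns the case `γ(0) > π/8` into the first. -/

section Solution

variable {E : Type*} [NormedAddCommGroup E] [NormedSpace ℝ E]

def IsSolutionOnIci (F : E → E) (γ : ℝ → E) : Prop :=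
  ∀ t ∈ Ici (0 : ℝ), HasDerivWithinAt γ (F (γ t)) (Ici 0) t

variable {F : E → E} {γ : ℝ → E}

theorem IsSolutionOnIci.continuousOn (hγ : IsSolutionOnIci F γ) : ContinuousOn γ (Ici 0) :=
  fun t ht => (hγ t ht).continuousWithinAt

theorem IsSolutionOnIci.eq_of_apply_eq_of_le {a : E} {K t₀ t : ℝ} (hγ : IsSolutionOnIci F γ)
    (hF : ∀ x, ‖F x‖ ≤ K * ‖x - a‖) (ht₀ : 0 ≤ t₀) (ha : γ t₀ = a) (ht : t₀ ≤ t) : γ t = a := by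
  have hsub : Icc t₀ t ⊆ Ici 0 := fun s hs => ht₀.trans hs.1
  have hzero := eq_zero_of_abs_deriv_le_mul_abs_self_of_eq_zero_right (f := fun s => γ s - a)
    (hγ.continuousOn.mono hsub |>.sub continuousOn_const)
    (fun s hs => ((hγ s (ht₀.trans hs.1)).mono (Ici_subset_Ici.2 (ht₀.trans hs.1))).sub_const a)
    (sub_eq_zero.2 ha) (fun s _ => hF (γ s)) t ⟨ht, le_rfl⟩
  exact sub_eq_zero.1 hzero

/-- Backward uniqueness: reversing time turns the field into `-F`, with the same bound. -/
theorem IsSolutionOnIci.eq_of_apply_eq_of_ge {a : E} {K t₀ t : ℝ} (hγ : IsSolutionOnIci F γ)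
    (hF : ∀ x, ‖F x‖ ≤ K * ‖x - a‖) (ha : γ t₀ = a) (ht : 0 ≤ t) (htt₀ : t ≤ t₀) :
    γ t = a := by
  have hmaps : ∀ s, MapsTo (fun u => t₀ - u) (Icc s (t₀ - t)) (Ici 0) :=
    fun s u hu => by simp only [mem_Ici]; linarith [hu.2]
  have hrev : ∀ s ∈ Ico 0 (t₀ - t),
      HasDerivWithinAt (fun u => γ (t₀ - u) - a) (-F (γ (t₀ - s))) (Ici s) s := by
    intro s hs
    have hcomp := (hγ (t₀ - s) (hmaps s ⟨le_rfl, hs.2.le⟩)).scomp s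
      ((hasDerivWithinAt_id s (Icc s (t₀ - t))).const_sub t₀) (hmaps s)
    rw [neg_one_smul] at hcomp
    exact (hcomp.mono_of_mem_nhdsWithin (Icc_mem_nhdsGE hs.2)).sub_const a
  have hzero := eq_zero_of_abs_deriv_le_mul_abs_self_of_eq_zero_right
    ((hγ.continuousOn.comp (continuousOn_const.sub continuousOn_id) (hmaps 0)).sub
      continuousOn_const) hrev (by simp [ha]) (fun s _ => (norm_neg _).trans_le (hF _))
    (t₀ - t) ⟨by linarith, le_rfl⟩
  simpa using sub_eq_zero.1 hzero

theorem IsSolutionOnIci.eq_of_apply_eq {a : E} {K t₀ t : ℝ} (hγ : IsSolutionOnIci F γ)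
    (hF : ∀ x, ‖F x‖ ≤ K * ‖x - a‖) (ht₀ : 0 ≤ t₀) (ha : γ t₀ = a) (ht : 0 ≤ t) : γ t = a :=
  (le_total t₀ t).elim (hγ.eq_of_apply_eq_of_le hF ht₀ ha) (hγ.eq_of_apply_eq_of_ge hF ha ht)

end Solution

theorem antitoneOn_Ici_of_hasDerivWithinAt_nonpos {f f' : ℝ → ℝ}
    (hf : ∀ t ∈ Ici (0 : ℝ), HasDerivWithinAt f (f' t) (Ici 0) t)
    (hf' : ∀ t ∈ Ici (0 : ℝ), f' t ≤ 0) : AntitoneOn f (Ici 0) := by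
  refine antitoneOn_of_hasDerivWithinAt_nonpos (convex_Ici 0)
    (fun t ht => (hf t ht).continuousWithinAt) (fun t ht => ?_) (fun t ht => hf' t ?_)
  · rw [interior_Ici] at ht ⊢
    exact (hf t (mem_Ici.2 (le_of_lt ht))).mono Ioi_subset_Ici_self
  · rw [interior_Ici] at ht
    exact mem_Ici.2 (le_of_lt ht)

namespace IsSolutionOnIci

variable {F : ℝ → ℝ} {γ : ℝ → ℝ}

theorem lt_of_apply_lt {a K : ℝ} (hγ : IsSolutionOnIci F γ) (hF : ∀ x, |F x| ≤ K * |x - a|)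
    (h0 : γ 0 < a) : ∀ t ∈ Ici (0 : ℝ), γ t < a := by
  intro t ht
  by_contra! hle
  obtain ⟨s, hs, hγs⟩ := intermediate_value_Icc ht (hγ.continuousOn.mono fun _ h => h.1)
    ⟨h0.le, hle⟩
  exact h0.ne (hγ.eq_of_apply_eq hF hs.1 hγs le_rfl)

theorem lt_apply_of_lt {a K : ℝ} (hγ : IsSolutionOnIci F γ) (hF : ∀ x, |F x| ≤ K * |x - a|)
    (h0 : a < γ 0) : ∀ t ∈ Ici (0 : ℝ), a < γ t := by
  intro t ht
  by_contra! hle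
  obtain ⟨s, hs, hγs⟩ := intermediate_value_Icc' ht (hγ.continuousOn.mono fun _ h => h.1)
    ⟨hle, h0.le⟩
  exact h0.ne' (hγ.eq_of_apply_eq hF hs.1 hγs le_rfl)

theorem antitoneOn (hγ : IsSolutionOnIci F γ) (hF : ∀ t ∈ Ici (0 : ℝ), F (γ t) ≤ 0) :
    AntitoneOn γ (Ici 0) :=
  antitoneOn_Ici_of_hasDerivWithinAt_nonpos hγ hF

/-- `γ t * exp (c t)` is antitone. -/
theorem le_mul_exp_neg {c : ℝ} (hγ : IsSolutionOnIci F γ)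
    (hF : ∀ t ∈ Ici (0 : ℝ), F (γ t) ≤ -c * γ t) :
    ∀ t ∈ Ici (0 : ℝ), γ t ≤ γ 0 * exp (-c * t) := by
  have hanti : AntitoneOn (fun t => γ t * exp (c * t)) (Ici 0) :=
    antitoneOn_Ici_of_hasDerivWithinAt_nonpos
      (fun t ht => (hγ t ht).mul ((hasDerivAt_id t).const_mul c).exp.hasDerivWithinAt)
      (fun t ht => by
        have := mul_nonpos_of_nonpos_of_nonneg (by linarith [hF t ht] : F (γ t) + c * γ t ≤ 0)
          (exp_pos (c * t)).le
        simp only [id, mul_one]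
        linarith)
  intro t ht
  have h := hanti self_mem_Ici ht ht
  simp only [mul_zero, exp_zero, mul_one] at h
  rw [neg_mul, exp_neg, ← div_eq_mul_inv, le_div_iff₀ (exp_pos _)]
  exact h

end IsSolutionOnIci

noncomputable def cuspField (x : ℝ) : ℝ :=
  -(sin x * sin (π / 4 - 2 * x) * cos (x + π / 4))

theorem cuspField_pi_div_four_sub (x : ℝ) : cuspField (π / 4 - x) = -cuspField x := by
  have h1 : sin (π / 4 - 2 * (π / 4 - x)) = -sin (π / 4 - 2 * x) := by
    rw [← sin_neg]; ring_nf
  have h2 : cos (π / 4 - x + π / 4) = sin x := by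
    rw [← cos_pi_div_two_sub]; ring_nf
  have h3 : sin (π / 4 - x) = cos (x + π / 4) := by
    rw [← sin_pi_div_two_sub]; ring_nf
  simp only [cuspField, h1, h2, h3]
  ring

theorem abs_cuspField_le (x : ℝ) : |cuspField x| ≤ |x| := by
  rw [cuspField, abs_neg, abs_mul, abs_mul]
  calc |sin x| * |sin (π / 4 - 2 * x)| * |cos (x + π / 4)| ≤ |x| * 1 * 1 := by
        gcongr ?_ * ?_ * ?_
        exacts [abs_sin_le_abs, abs_sin_le_one _, abs_cos_le_one _]
    _ = |x| := by ring

theorem abs_cuspField_le_pi_div_eight (x : ℝ) : |cuspField x| ≤ 2 * |x - π / 8| := by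
  rw [cuspField, abs_neg, abs_mul, abs_mul]
  calc |sin x| * |sin (π / 4 - 2 * x)| * |cos (x + π / 4)| ≤ 1 * |π / 4 - 2 * x| * 1 := by
        gcongr ?_ * ?_ * ?_
        exacts [abs_sin_le_one _, abs_sin_le_abs, abs_cos_le_one _]
    _ = 2 * |x - π / 8| := by
        rw [show π / 4 - 2 * x = -2 * (x - π / 8) by ring, abs_mul]
        norm_num

theorem cuspField_nonpos {x : ℝ} (h0 : 0 ≤ x) (h8 : x ≤ π / 8) : cuspField x ≤ 0 := by
  have hπ := pi_pos
  have hsin : 0 ≤ sin x := sin_nonneg_of_nonneg_of_le_pi h0 (by linarith)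
  have hsin' : 0 ≤ sin (π / 4 - 2 * x) := sin_nonneg_of_nonneg_of_le_pi (by linarith) (by linarith)
  have hcos : 0 ≤ cos (x + π / 4) := cos_nonneg_of_mem_Icc ⟨by linarith, by linarith⟩
  rw [cuspField, neg_nonpos]
  positivity

/-- Jordan's inequality `sin x ≥ 2x/π` bounds the first factor; the other two are decreasing
on `[0, π/8]`. -/
theorem cuspField_le_neg_mul {x y : ℝ} (hx : 0 ≤ x) (hxy : x ≤ y) (hy : y ≤ π / 8) :
    cuspField x ≤ -(2 / π * sin (π / 4 - 2 * y) * cos (y + π / 4)) * x := by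
  have hπ := pi_pos
  have hjordan : 2 / π * x ≤ sin x := mul_le_sin hx (by linarith)
  have hsin : sin (π / 4 - 2 * y) ≤ sin (π / 4 - 2 * x) :=
    sin_le_sin_of_le_of_le_pi_div_two (by linarith) (by linarith) (by linarith)
  have hcos : cos (y + π / 4) ≤ cos (x + π / 4) :=
    cos_le_cos_of_nonneg_of_le_pi (by linarith) (by linarith) (by linarith)
  have hsin0 : 0 ≤ sin (π / 4 - 2 * y) := sin_nonneg_of_nonneg_of_le_pi (by linarith) (by linarith)
  have hcos0 : 0 ≤ cos (y + π / 4) := cos_nonneg_of_mem_Icc ⟨by linarith, by linarith⟩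
  have key : 2 / π * x * (sin (π / 4 - 2 * y) * cos (y + π / 4)) ≤
      sin x * (sin (π / 4 - 2 * x) * cos (x + π / 4)) := by
    gcongr
    · exact (by positivity : 0 ≤ 2 / π * x).trans hjordan
    · exact hsin0.trans hsin
  rw [cuspField]
  linarith

namespace IsSolutionOnIci

variable {γ : ℝ → ℝ}

theorem pi_div_four_sub (hγ : IsSolutionOnIci cuspField γ) :
    IsSolutionOnIci cuspField (fun t => π / 4 - γ t) := fun t ht => by
  rw [cuspField_pi_div_four_sub]
  exact (hγ t ht).const_sub _

theorem pos_of_pos (hγ : IsSolutionOnIci cuspField γ) (h0 : 0 < γ 0) :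
    ∀ t ∈ Ici (0 : ℝ), 0 < γ t :=
  hγ.lt_apply_of_lt (K := 1) (fun x => by simpa using abs_cuspField_le x) h0

theorem exp_decay_of_lt_pi_div_eight (hγ : IsSolutionOnIci cuspField γ) (h0 : 0 < γ 0)
    (h8 : γ 0 < π / 8) :
    AntitoneOn γ (Ici 0) ∧ Tendsto γ atTop (nhds 0) ∧
      ∃ c : ℝ, 0 < c ∧ ∀ t ∈ Ici (0 : ℝ), γ t ≤ γ 0 * exp (-c * t) := by
  have hπ := pi_pos
  have hpos := hγ.pos_of_pos h0
  have hlt := hγ.lt_of_apply_lt abs_cuspField_le_pi_div_eight h8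
  have hanti := hγ.antitoneOn fun t ht => cuspField_nonpos (hpos t ht).le (hlt t ht).le
  set c := 2 / π * sin (π / 4 - 2 * γ 0) * cos (γ 0 + π / 4)
  have hc : 0 < c := by
    have := sin_pos_of_pos_of_lt_pi (x := π / 4 - 2 * γ 0) (by linarith) (by linarith)
    have := cos_pos_of_mem_Ioo (x := γ 0 + π / 4) ⟨by linarith, by linarith⟩
    positivity
  have hdecay := hγ.le_mul_exp_neg fun t ht =>
    cuspField_le_neg_mul (hpos t ht).le (hanti self_mem_Ici ht ht) h8.le
  have hexp : Tendsto (fun t => γ 0 * exp (-c * t)) atTop (nhds 0) := by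
    simpa using (tendsto_exp_neg_atTop_nhds_zero.comp
      (tendsto_id.const_mul_atTop hc)).const_mul (γ 0)
  refine ⟨hanti, ?_, c, hc, hdecay⟩
  exact tendsto_of_tendsto_of_tendsto_of_le_of_le' tendsto_const_nhds hexp
    ((eventually_ge_atTop 0).mono fun t ht => (hpos t ht).le) ((eventually_ge_atTop 0).mono hdecay)

end IsSolutionOnIci

/-- for the reduced ODE `dγ/dt = -sin(γ) sin(π/4 - 2γ) cos(γ + π/4)`
with `0 < γ(0) < π/4`, the solution stays in `(0, π/4)`; if `γ(0) < π/8` it decreases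
to `0` exponentially fast, if `γ(0) > π/8` it converges to `π/4`, and if `γ(0) = π/8`
it is constant. -/
theorem reduced_ode_cusping
    (γ : ℝ → ℝ)
    (hode : ∀ t ∈ Set.Ici (0 : ℝ), HasDerivWithinAt γ
      (-(Real.sin (γ t) * Real.sin (π / 4 - 2 * γ t) * Real.cos (γ t + π / 4)))
      (Set.Ici (0 : ℝ)) t)
    (h0 : 0 < γ 0) (h1 : γ 0 < π / 4) :
    (∀ t ∈ Set.Ici (0 : ℝ), 0 < γ t ∧ γ t < π / 4) ∧
    (γ 0 < π / 8 →
      AntitoneOn γ (Set.Ici (0 : ℝ)) ∧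
      Filter.Tendsto γ Filter.atTop (nhds 0) ∧
      ∃ c : ℝ, 0 < c ∧ ∀ t ∈ Set.Ici (0 : ℝ), γ t ≤ γ 0 * Real.exp (-c * t)) ∧
    (π / 8 < γ 0 → Filter.Tendsto γ Filter.atTop (nhds (π / 4))) ∧
    (γ 0 = π / 8 → ∀ t ∈ Set.Ici (0 : ℝ), γ t = π / 8) := by
  have hγ : IsSolutionOnIci cuspField γ := hode
  have hpos := hγ.pos_of_pos h0
  have hpos' := hγ.pi_div_four_sub.pos_of_pos (by linarith)
  refine ⟨fun t ht => ⟨hpos t ht, by linarith [hpos' t ht]⟩,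
    hγ.exp_decay_of_lt_pi_div_eight h0, fun h8 => ?_,
    fun h8 t ht => hγ.eq_of_apply_eq abs_cuspField_le_pi_div_eight le_rfl h8 ht⟩
  have hdecay := (hγ.pi_div_four_sub.exp_decay_of_lt_pi_div_eight (by linarith) (by linarith)).2.1
  simpa using hdecay.const_sub (π / 4)
end

section
/- Let ζ_1, ζ_2, γ : [0, ∞) → ℝ be differentiable functions satisfying the system dζ_1/dt = -sin(ζ_1) sin(ζ_2) cos(2γ + ζ_1 + ζ_2), dζ_2/dt = sin(ζ_2) sin(ζ_1) cos(2γ + ζ_1 + ζ_2), dγ/dt = sin(γ) sin(ζ_1 - ζ_2) cos(γ + ζ_1 + ζ_2), with initial data satisfying ζ_1(0), ζ_2(0), γ(0) ∈ (0, π/4), ζ_1(0) + ζ_2(0) = π/4, and γ(0) ≠ ζ_2(0). Then: if ζ_2(0) > γ(0), there exist constants C, c > 0 such that 0 < ζ_1(t) ≤ C·e^{-ct} for all t ≥ 0, so ζ_1(t) → 0 exponentially as t → ∞; if γ(0) > ζ_2(0), there exist constants C, c > 0 such that 0 < ζ_2(t) ≤ C·e^{-ct} for all t ≥ 0, so ζ_2(t)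 → 0 exponentially as t → ∞. -/
/-!
On the plane `ζ₁ + ζ₂ = π / 4`, which the flow preserves, `x = ζ₂` and `y = γ` solve
`x' = F x * sin (π / 4 - 2 * y)`, `y' = F y * sin (π / 4 - 2 * x)` with
`F u = sin u * sin (π / 4 - u)`; `(π / 4 - x, π / 4 - y)` solves the same system, which turns the
case `γ 0 < ζ₂ 0` into the case `ζ₂ 0 < γ 0`. When `x 0 < y 0` the solution stays in the triangle
`0 < x < y < π / 4` and `F x / F y` is conserved. Since `F` increases up to its maximum at `π / 8`
and decreases after it, the conserved ratio forces `y` to end up above `π / 8 + δ`, and from then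
on `x' ≤ -c x`.
-/

open Real Set

section RightDerivatives

variable {w g : ℝ → ℝ} {a : ℝ}

theorem hasDerivWithinAt_Ici_of_le (hw : ∀ t ∈ Ici a, HasDerivWithinAt w (g t) (Ici a) t)
    {b : ℝ} (hab : a ≤ b) : ∀ t ∈ Ici b, HasDerivWithinAt w (g t) (Ici b) t :=
  fun t ht => (hw t (hab.trans ht)).mono (Ici_subset_Ici.2 hab)

theorem eq_of_hasDerivWithinAt_zero (hw : ∀ t ∈ Ici a, HasDerivWithinAt w 0 (Ici a) t) :
    ∀ t ∈ Ici a, w t = w a := fun t ht =>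
  constant_of_has_deriv_right_zero
    (fun s hs => (hw s hs.1).continuousWithinAt.mono Icc_subset_Ici_self)
    (fun s hs => (hw s hs.1).mono (Ici_subset_Ici.2 hs.1)) t ⟨ht, le_rfl⟩

theorem le_mul_exp_of_hasDerivWithinAt_le {K : ℝ}
    (hw : ∀ t ∈ Ici a, HasDerivWithinAt w (g t) (Ici a) t) (hg : ∀ t ∈ Ici a, g t ≤ K * w t) :
    ∀ t ∈ Ici a, w t ≤ w a * exp (K * (t - a)) := fun t ht => by
  simpa only [gronwallBound_ε0] using le_gronwallBound_of_liminf_deriv_right_le (ε := 0)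
    (fun s hs => (hw s hs.1).continuousWithinAt.mono Icc_subset_Ici_self)
    (fun s hs _ => ((hw s hs.1).mono (Ici_subset_Ici.2 hs.1)).liminf_right_slope_le) le_rfl
    (fun s hs => by simpa using hg s hs.1) t ⟨ht, le_rfl⟩

theorem add_mul_le_of_le_hasDerivWithinAt {r : ℝ}
    (hw : ∀ t ∈ Ici a, HasDerivWithinAt w (g t) (Ici a) t) (hg : ∀ t ∈ Ici a, r ≤ g t) :
    ∀ t ∈ Ici a, w a + r * (t - a) ≤ w t := fun t ht =>
  image_le_of_deriv_right_le_deriv_boundary (f' := fun _ => r)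
    (by fun_prop) (fun s _ => ((hasDerivAt_id s).sub_const a |>.const_mul r |>.const_add (w a)
      |>.hasDerivWithinAt).congr_deriv (mul_one r)) (by simp)
    (fun s hs => (hw s hs.1).continuousWithinAt.mono Icc_subset_Ici_self)
    (fun s hs => (hw s hs.1).mono (Ici_subset_Ici.2 hs.1)) (fun s hs => hg s hs.1) ⟨ht, le_rfl⟩

theorem pos_of_hasDerivWithinAt_ge_neg_mul {K : ℝ}
    (hw : ∀ t ∈ Ici a, HasDerivWithinAt w (g t) (Ici a) t)
    (hg : ∀ t ∈ Ici a, 0 < w t → -(K * w t) ≤ g t) (ha : 0 < w a) : ∀ t ∈ Ici a, 0 < w t := by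
  intro t ht
  -- `w` cannot touch the barrier `L`, which decays strictly faster than `w` can.
  obtain ⟨L, hL_def⟩ : ∃ L : ℝ → ℝ, L = fun s => w a * exp (-(K + 1) * (s - a)) := ⟨_, rfl⟩
  have hL_pos : ∀ s, 0 < L s := fun s => by rw [hL_def]; positivity
  have hL : ∀ s, HasDerivAt L (-(K + 1) * L s) s := fun s => by
    subst hL_def
    exact ((((hasDerivAt_id s).sub_const a).const_mul (-(K + 1))).exp.const_mul (w a)).congr_deriv
      (by simp only [id, mul_one]; ring)
  have hLw := image_le_of_deriv_right_lt_deriv_boundary'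
    (fun s _ => (hL s).continuousAt.continuousWithinAt) (fun s _ => (hL s).hasDerivWithinAt)
    (by simp [hL_def]) (fun s hs => (hw s hs.1).continuousWithinAt.mono Icc_subset_Ici_self)
    (fun s hs => (hw s hs.1).mono (Ici_subset_Ici.2 hs.1)) (fun s hs hLs => by
      have := hg s hs.1 (hLs ▸ hL_pos s)
      rw [← hLs] at this
      linarith [hL_pos s]) ⟨ht, le_rfl⟩
  exact (hL_pos t).trans_le hLw

end RightDerivatives

namespace SectorDynamics

noncomputable def F (u : ℝ) : ℝ := sin u * sin (π / 4 - u)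

theorem F_eq_cos (u : ℝ) : F u = (cos (2 * u - π / 4) - cos (π / 4)) / 2 := by
  have h := cos_sub_cos (2 * u - π / 4) (π / 4)
  rw [show (2 * u - π / 4 + π / 4) / 2 = u by ring,
    show (2 * u - π / 4 - π / 4) / 2 = -(π / 4 - u) by ring, sin_neg] at h
  rw [F, h]; ring

theorem F_reflect (u : ℝ) : F (π / 4 - u) = F u := by
  rw [F, F, sub_sub_cancel, mul_comm]

theorem hasDerivAt_F (u : ℝ) : HasDerivAt F (sin (π / 4 - 2 * u)) u := by
  have h := (hasDerivAt_sin u).mul ((hasDerivAt_id u).const_sub (π / 4)).sin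
  refine h.congr_deriv ?_
  simp only [id]
  rw [show π / 4 - 2 * u = (π / 4 - u) - u by ring, sin_sub (π / 4 - u) u]
  ring

theorem F_pos {u : ℝ} (hu : u ∈ Ioo 0 (π / 4)) : 0 < F u :=
  mul_pos (sin_pos_of_pos_of_lt_pi hu.1 (by linarith [hu.2, pi_pos]))
    (sin_pos_of_pos_of_lt_pi (by linarith [hu.2]) (by linarith [hu.1, pi_pos]))

theorem abs_F_le (u : ℝ) : |F u| ≤ |u| := by
  rw [F, abs_mul]
  exact (mul_le_of_le_one_right (abs_nonneg _) (abs_sin_le_one _)).trans abs_sin_le_abs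

theorem F_le_F_pi_div_eight (u : ℝ) : F u ≤ F (π / 8) := by
  rw [F_eq_cos, F_eq_cos, show 2 * (π / 8) - π / 4 = 0 by ring, cos_zero]
  linarith [cos_le_one (2 * u - π / 4)]

theorem F_pi_div_eight_sub_le (u : ℝ) : F (π / 8) - F u ≤ (u - π / 8) ^ 2 := by
  rw [F_eq_cos, F_eq_cos, show 2 * (π / 8) - π / 4 = 0 by ring, cos_zero]
  nlinarith [one_sub_sq_div_two_le_cos (x := 2 * u - π / 4)]

theorem strictMonoOn_F : StrictMonoOn F (Icc 0 (π / 8)) := by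
  intro u hu v hv huv
  rw [F_eq_cos, F_eq_cos, ← cos_neg (2 * u - π / 4), ← cos_neg (2 * v - π / 4)]
  have := strictAntiOn_cos (a := -(2 * v - π / 4)) (b := -(2 * u - π / 4))
    ⟨by linarith [hv.2], by linarith [hv.1, pi_pos]⟩
    ⟨by linarith [hu.2], by linarith [hu.1, pi_pos]⟩
    (by linarith)
  linarith

theorem strictAntiOn_F : StrictAntiOn F (Icc (π / 8) (π / 4)) := by
  intro u hu v hv huv
  rw [F_eq_cos, F_eq_cos]
  have := strictAntiOn_cos (a := 2 * u - π / 4) (b := 2 * v - π / 4)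
    ⟨by linarith [hu.1], by linarith [hu.2, pi_pos]⟩
    ⟨by linarith [hv.1], by linarith [hv.2, pi_pos]⟩
    (by linarith)
  linarith

theorem pi_div_eight_lt_of_F_le {u v : ℝ} (hu : 0 ≤ u) (huv : u < v) (hF : F v ≤ F u) :
    π / 8 < v := by
  by_contra! hv
  exact (strictMonoOn_F ⟨hu, huv.le.trans hv⟩ ⟨hu.trans huv.le, hv⟩ huv).not_ge hF

theorem lt_pi_div_eight_of_F_le {u v : ℝ} (huv : u < v) (hv : v ≤ π / 4) (hF : F u ≤ F v) :
    u < π / 8 := by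
  by_contra! hu
  exact (strictAntiOn_F ⟨hu, huv.le.trans hv⟩ ⟨hu.trans huv.le, hv⟩ huv).not_ge hF

theorem exists_pos_le_abs_sub_of_F_le {q : ℝ} (hq : q < 1) :
    ∃ δ > 0, ∀ u, F u ≤ q * F (π / 8) → δ ≤ |u - π / 8| := by
  have hF8 : 0 < F (π / 8) := F_pos ⟨by positivity, by linarith [pi_pos]⟩
  refine ⟨√((1 - q) * F (π / 8)), sqrt_pos.2 (mul_pos (by linarith) hF8), fun u hu => ?_⟩
  rw [← sqrt_sq_eq_abs]
  exact sqrt_le_sqrt (by linarith [F_pi_div_eight_sub_le u])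

theorem mul_le_F {u b : ℝ} (hu : 0 ≤ u) (hub : u ≤ b) (hb : b < π / 4) :
    2 / π * sin (π / 4 - b) * u ≤ F u := by
  have hsin_b : 0 ≤ sin (π / 4 - b) :=
    sin_nonneg_of_nonneg_of_le_pi (by linarith) (by linarith [pi_pos])
  have hsin_u : sin (π / 4 - b) ≤ sin (π / 4 - u) :=
    sin_le_sin_of_le_of_le_pi_div_two (by linarith [pi_pos]) (by linarith [pi_pos]) (by linarith)
  calc 2 / π * sin (π / 4 - b) * u = 2 / π * u * sin (π / 4 - b) := by ring
    _ ≤ sin u * sin (π / 4 - u) := mul_le_mul (mul_le_sin hu (by linarith [pi_pos])) hsin_u hsin_b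
      (sin_nonneg_of_nonneg_of_le_pi hu (by linarith [pi_pos]))

theorem F_mul_sin_sub_F_mul_sin_ge {u v : ℝ} (huv : u ≤ v) :
    -(2 * (v - u)) ≤ F v * sin (π / 4 - 2 * u) - F u * sin (π / 4 - 2 * v) := by
  have key : F v * sin (π / 4 - 2 * u) - F u * sin (π / 4 - 2 * v) =
      (sin (2 * (v - u)) - cos (π / 4) * (sin (2 * v - π / 4) - sin (2 * u - π / 4))) / 2 := by
    have hsub : sin (2 * (v - u)) = sin (2 * v - π / 4) * cos (2 * u - π / 4) -
        cos (2 * v - π / 4) * sin (2 * u - π / 4) := by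
      rw [← sin_sub]; ring_nf
    have hneg : ∀ w : ℝ, sin (π / 4 - 2 * w) = -sin (2 * w - π / 4) := fun w => by
      rw [← sin_neg, neg_sub]
    rw [F_eq_cos, F_eq_cos, hsub, hneg, hneg]
    ring
  have h1 : -(2 * (v - u)) ≤ sin (2 * (v - u)) := by
    have := abs_sin_le_abs (x := 2 * (v - u))
    rw [abs_of_nonneg (by linarith : 0 ≤ 2 * (v - u))] at this
    linarith [neg_abs_le (sin (2 * (v - u)))]
  have h2 : |sin (2 * v - π / 4) - sin (2 * u - π / 4)| ≤ 2 * (v - u) := by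
    have := abs_sin_sub_sin_le (2 * v - π / 4) (2 * u - π / 4)
    rwa [show 2 * v - π / 4 - (2 * u - π / 4) = 2 * (v - u) by ring,
      abs_of_nonneg (by linarith : 0 ≤ 2 * (v - u))] at this
  have hc : 0 ≤ cos (π / 4) ∧ cos (π / 4) ≤ 1 :=
    ⟨(cos_pos_of_mem_Ioo ⟨by linarith [pi_pos], by linarith [pi_pos]⟩).le, cos_le_one _⟩
  rw [key]
  nlinarith [le_abs_self (sin (2 * v - π / 4) - sin (2 * u - π / 4))]

theorem exists_le_mul_exp_of_le_neg {x s : ℝ → ℝ} {t₁ m : ℝ} (ht₁ : 0 ≤ t₁) (hm : 0 < m)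
    (hx : ∀ t ∈ Ici 0, HasDerivWithinAt x (F (x t) * s t) (Ici 0) t)
    (hx_mem : ∀ t ∈ Ici 0, x t ∈ Ioo 0 (π / 4)) (hs : ∀ t ∈ Ici t₁, s t ≤ -m) :
    ∃ C c : ℝ, 0 < C ∧ 0 < c ∧ ∀ t ∈ Ici 0, x t ≤ C * exp (-c * t) := by
  have hx₁ := hasDerivWithinAt_Ici_of_le hx ht₁
  have hmem₁ : ∀ t ∈ Ici t₁, x t ∈ Ioo 0 (π / 4) := fun t ht => hx_mem t (ht₁.trans ht)
  have hle : ∀ t ∈ Ici t₁, x t ≤ x t₁ := fun t ht => by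
    simpa using le_mul_exp_of_hasDerivWithinAt_le (K := 0) hx₁ (fun u hu => by
      simpa using mul_nonpos_of_nonneg_of_nonpos (F_pos (hmem₁ u hu)).le
        ((hs u hu).trans (neg_nonpos.2 hm.le))) t ht
  obtain ⟨hx₁_pos, hx₁_lt⟩ := hmem₁ t₁ self_mem_Ici
  set μ := 2 / π * sin (π / 4 - x t₁)
  have hμ : 0 < μ := mul_pos (by positivity)
    (sin_pos_of_pos_of_lt_pi (by linarith) (by linarith [pi_pos]))
  have hdecay := le_mul_exp_of_hasDerivWithinAt_le (K := -(m * μ)) hx₁ fun t ht => by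
    have hF := mul_le_F (hmem₁ t ht).1.le (hle t ht) hx₁_lt
    nlinarith [hs t ht, F_pos (hmem₁ t ht)]
  refine ⟨π / 4 * exp (m * μ * t₁), m * μ, by positivity, by positivity, fun t ht => ?_⟩
  rw [mul_assoc, ← exp_add, show m * μ * t₁ + -(m * μ) * t = -(m * μ) * (t - t₁) by ring]
  rcases le_total t₁ t with h | h
  · calc x t ≤ x t₁ * exp (-(m * μ) * (t - t₁)) := hdecay t h
      _ ≤ π / 4 * exp (-(m * μ) * (t - t₁)) := by gcongr
  · have : 1 ≤ exp (-(m * μ) * (t - t₁)) := one_le_exp (by nlinarith [mul_pos hm hμ])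
    nlinarith [(hx_mem t ht).2, pi_pos]

def SectorEq (x y : ℝ → ℝ) : Prop :=
  ∀ t ∈ Ici (0 : ℝ), HasDerivWithinAt x (F (x t) * sin (π / 4 - 2 * y t)) (Ici 0) t

theorem sectorEq_of_angles {ζ₁ ζ₂ γ : ℝ → ℝ} (hsum : ∀ t ∈ Ici 0, ζ₁ t + ζ₂ t = π / 4)
    (hζ₂ : ∀ t ∈ Ici 0, HasDerivWithinAt ζ₂
      (sin (ζ₂ t) * sin (ζ₁ t) * cos (2 * γ t + ζ₁ t + ζ₂ t)) (Ici 0) t)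
    (hγ : ∀ t ∈ Ici 0, HasDerivWithinAt γ
      (sin (γ t) * sin (ζ₁ t - ζ₂ t) * cos (γ t + ζ₁ t + ζ₂ t)) (Ici 0) t) :
    SectorEq ζ₂ γ ∧ SectorEq γ ζ₂ := by
  refine ⟨fun t ht => (hζ₂ t ht).congr_deriv ?_, fun t ht => (hγ t ht).congr_deriv ?_⟩ <;>
    rw [F, show ζ₁ t = π / 4 - ζ₂ t by linarith [hsum t ht]]
  · rw [show 2 * γ t + (π / 4 - ζ₂ t) + ζ₂ t = π / 2 - (π / 4 - 2 * γ t) by ring,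
      cos_pi_div_two_sub]
  · rw [show π / 4 - ζ₂ t - ζ₂ t = π / 4 - 2 * ζ₂ t by ring,
      show γ t + (π / 4 - ζ₂ t) + ζ₂ t = π / 2 - (π / 4 - γ t) by ring, cos_pi_div_two_sub]
    ring

def InTriangle (x y : ℝ → ℝ) : Prop :=
  ∀ t ∈ Ici (0 : ℝ), 0 < x t ∧ x t < y t ∧ y t < π / 4

theorem InTriangle.F_pos {x y : ℝ → ℝ} (h : InTriangle x y) :
    ∀ t ∈ Ici 0, 0 < F (x t) ∧ 0 < F (y t) := fun t ht => by
  obtain ⟨hx, hxy, hy⟩ := h t ht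
  exact ⟨SectorDynamics.F_pos ⟨hx, by linarith⟩, SectorDynamics.F_pos ⟨by linarith, hy⟩⟩

namespace SectorEq

variable {x y : ℝ → ℝ}

theorem reflect (hx : SectorEq x y) :
    SectorEq (fun t => π / 4 - x t) (fun t => π / 4 - y t) := fun t ht => by
  refine ((hx t ht).const_sub (π / 4)).congr_deriv ?_
  rw [F_reflect, show π / 4 - 2 * (π / 4 - y t) = -(π / 4 - 2 * y t) by ring, sin_neg, mul_neg]

theorem pos (hx : SectorEq x y) (h0 : 0 < x 0) : ∀ t ∈ Ici 0, 0 < x t :=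
  pos_of_hasDerivWithinAt_ge_neg_mul (K := 1) hx (fun t _ hxt => by
    have h : |F (x t) * sin (π / 4 - 2 * y t)| ≤ x t := by
      rw [abs_mul]
      exact (mul_le_of_le_one_right (abs_nonneg _) (abs_sin_le_one _)).trans
        ((abs_F_le _).trans_eq (abs_of_pos hxt))
    linarith [neg_abs_le (F (x t) * sin (π / 4 - 2 * y t))]) h0

theorem lt (hx : SectorEq x y) (hy : SectorEq y x) (h0 : x 0 < y 0) : ∀ t ∈ Ici 0, x t < y t :=
  fun t ht => sub_pos.1 <| pos_of_hasDerivWithinAt_ge_neg_mul (K := 2) (w := fun t => y t - x t)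
    (fun t ht => (hy t ht).sub (hx t ht)) (fun _ _ h => F_mul_sin_sub_F_mul_sin_ge (sub_pos.1 h).le)
    (sub_pos.2 h0) t ht

theorem inTriangle (hx : SectorEq x y) (hy : SectorEq y x) (hx0 : 0 < x 0) (hxy : x 0 < y 0)
    (hy0 : y 0 < π / 4) : InTriangle x y := fun t ht =>
  ⟨hx.pos hx0 t ht, hx.lt hy hxy t ht, sub_pos.1 (hy.reflect.pos (sub_pos.2 hy0) t ht)⟩

theorem F_div_F_eq (hx : SectorEq x y) (hy : SectorEq y x) (hF : ∀ t ∈ Ici 0, F (y t) ≠ 0) :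
    ∀ t ∈ Ici 0, F (x t) / F (y t) = F (x 0) / F (y 0) :=
  eq_of_hasDerivWithinAt_zero (w := fun t => F (x t) / F (y t)) fun t ht =>
    (((hasDerivAt_F (x t)).comp_hasDerivWithinAt t (hx t ht)).div
      ((hasDerivAt_F (y t)).comp_hasDerivWithinAt t (hy t ht)) (hF t ht)).congr_deriv
      (by simp only [Function.comp_apply]; ring)

theorem monotoneOn (hy : SectorEq y x) (hxy : InTriangle x y)
    (hx8 : ∀ t ∈ Ici 0, x t ≤ π / 8) : MonotoneOn y (Ici 0) := by
  refine monotoneOn_of_hasDerivWithinAt_nonneg (f' := fun t => F (y t) * sin (π / 4 - 2 * x t))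
    (convex_Ici 0) (fun t ht => (hy t ht).continuousWithinAt) (fun t ht => ?_) (fun t ht => ?_)
  all_goals simp only [interior_Ici] at ht ⊢; have ht₀ : t ∈ Ici 0 := Ioi_subset_Ici_self ht
  · exact (hy t ht₀).mono Ioi_subset_Ici_self
  · exact mul_nonneg (hxy.F_pos t ht₀).2.le
      (sin_nonneg_of_nonneg_of_le_pi (by linarith [hx8 t ht₀])
        (by linarith [(hxy t ht₀).1, pi_pos]))

theorem exists_pi_div_eight_lt (hy : SectorEq y x) (hxy : InTriangle x y) {ρ : ℝ}
    (hρ : ∀ t ∈ Ici 0, F (x t) = ρ * F (y t)) : ∃ T ∈ Ici 0, π / 8 < y T := by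
  by_contra! hy8
  -- then `ρ < 1` keeps `x` a fixed distance below `π / 8`, so `y` grows at a linear rate
  have h0 : (0 : ℝ) ∈ Ici 0 := self_mem_Ici
  obtain ⟨hx0, hxy0, -⟩ := hxy 0 h0
  obtain ⟨hFx0, hFy0⟩ := hxy.F_pos 0 h0
  have hρ0 : 0 < ρ := pos_of_mul_pos_left (hρ 0 h0 ▸ hFx0) hFy0.le
  have hρ1 : ρ < 1 := by
    have := strictMonoOn_F ⟨hx0.le, (hxy0.trans_le (hy8 0 h0)).le⟩
      ⟨(hx0.trans hxy0).le, hy8 0 h0⟩ hxy0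
    rwa [hρ 0 h0, mul_lt_iff_lt_one_left hFy0] at this
  obtain ⟨δ, hδ, hsep⟩ := exists_pos_le_abs_sub_of_F_le hρ1
  have hx8 : ∀ t ∈ Ici 0, x t ≤ π / 8 - δ := fun t ht => by
    have h := hsep (x t) (by
      rw [hρ t ht]; exact mul_le_mul_of_nonneg_left (F_le_F_pi_div_eight _) hρ0.le)
    rw [abs_of_neg (by linarith [(hxy t ht).2.1, hy8 t ht])] at h
    linarith
  have hmono := hy.monotoneOn hxy fun t ht => (hx8 t ht).trans (by linarith)
  have hsinδ : 0 < sin (2 * δ) :=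
    sin_pos_of_pos_of_lt_pi (by positivity) (by linarith [hx8 0 h0, pi_pos])
  have hr : 0 < F (y 0) * sin (2 * δ) := mul_pos hFy0 hsinδ
  have hgrow := add_mul_le_of_le_hasDerivWithinAt (r := F (y 0) * sin (2 * δ)) hy fun t ht => by
    obtain ⟨hxt, hxyt, -⟩ := hxy t ht
    have hFy : F (y 0) ≤ F (y t) := strictMonoOn_F.monotoneOn ⟨(hx0.trans hxy0).le, hy8 0 h0⟩
      ⟨(hxt.trans hxyt).le, hy8 t ht⟩ (hmono h0 ht ht)
    have hsin : sin (2 * δ) ≤ sin (π / 4 - 2 * x t) := sin_le_sin_of_le_of_le_pi_div_two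
      (by linarith [pi_pos]) (by linarith [pi_pos]) (by linarith [hx8 t ht])
    exact mul_le_mul hFy hsin hsinδ.le (hxy.F_pos t ht).2.le
  have hT : π / 8 / (F (y 0) * sin (2 * δ)) ∈ Ici 0 := mem_Ici.2 (by positivity)
  have hyT := hgrow _ hT
  rw [sub_zero, mul_div_cancel₀ _ hr.ne'] at hyT
  linarith [hy8 _ hT]

theorem exists_pi_div_eight_add_le (hx : SectorEq x y) (hy : SectorEq y x)
    (hxy : InTriangle x y) :
    ∃ t₁ ≥ (0 : ℝ), ∃ δ > 0, ∀ t ∈ Ici t₁, π / 8 + δ ≤ y t := by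
  set ρ := F (x 0) / F (y 0) with hρ_def
  have hρ : ∀ t ∈ Ici 0, F (x t) = ρ * F (y t) := fun t ht => by
    rw [hρ_def, ← hx.F_div_F_eq hy (fun s hs => (hxy.F_pos s hs).2.ne') t ht,
      div_mul_cancel₀ _ (hxy.F_pos t ht).2.ne']
  rcases lt_or_ge 1 ρ with hρ1 | hρ1
  · -- `F y = F x / ρ ≤ F (π / 8) / ρ` keeps `y`, which exceeds `π / 8`, away from `π / 8`
    obtain ⟨δ, hδ, hsep⟩ := exists_pos_le_abs_sub_of_F_le (inv_lt_one_of_one_lt₀ hρ1)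
    refine ⟨0, le_rfl, δ, hδ, fun t ht => ?_⟩
    obtain ⟨hFx, hFy⟩ := hxy.F_pos t ht
    have hFyx : F (y t) = ρ⁻¹ * F (x t) := by
      rw [hρ t ht, inv_mul_cancel_left₀ (zero_lt_one.trans hρ1).ne']
    have hy8 : π / 8 < y t := pi_div_eight_lt_of_F_le (hxy t ht).1.le (hxy t ht).2.1 (by
      rw [hFyx]; exact mul_le_of_le_one_left hFx.le (inv_le_one_of_one_le₀ hρ1.le))
    have h := hsep (y t) (by
      rw [hFyx]; exact mul_le_mul_of_nonneg_left (F_le_F_pi_div_eight _) (by positivity))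
    rw [abs_of_pos (by linarith)] at h
    linarith
  · -- `x < π / 8`, so `y` increases
    have hmono := hy.monotoneOn hxy fun t ht => (lt_pi_div_eight_of_F_le (hxy t ht).2.1
      (hxy t ht).2.2.le (by rw [hρ t ht]; exact mul_le_of_le_one_left (hxy.F_pos t ht).2.le hρ1)).le
    obtain ⟨T, hT, hyT⟩ := hy.exists_pi_div_eight_lt hxy hρ
    exact ⟨T, hT, y T - π / 8, by linarith, fun t ht => by
      linarith [hmono hT (mem_Ici.2 (le_trans hT ht)) ht]⟩

theorem exists_exp_decay (hx : SectorEq x y) (hy : SectorEq y x) (hx0 : x 0 ∈ Ioo 0 (π / 4))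
    (hy0 : y 0 ∈ Ioo 0 (π / 4)) (hxy0 : x 0 < y 0) :
    ∃ C c : ℝ, 0 < C ∧ 0 < c ∧ ∀ t ∈ Ici (0 : ℝ), 0 < x t ∧ x t ≤ C * exp (-c * t) := by
  have hxy := hx.inTriangle hy hx0.1 hxy0 hy0.2
  obtain ⟨t₁, ht₁, δ, hδ, hyδ⟩ := hx.exists_pi_div_eight_add_le hy hxy
  have hδ8 : δ < π / 8 := by linarith [hyδ t₁ self_mem_Ici, (hxy t₁ ht₁).2.2]
  obtain ⟨C, c, hC, hc, hdecay⟩ := exists_le_mul_exp_of_le_neg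
    (s := fun t => sin (π / 4 - 2 * y t)) (m := sin (2 * δ)) ht₁
    (sin_pos_of_pos_of_lt_pi (by positivity) (by linarith)) hx
    (fun t ht => ⟨(hxy t ht).1, (hxy t ht).2.1.trans (hxy t ht).2.2⟩) fun t ht => by
      rw [show π / 4 - 2 * y t = -(2 * y t - π / 4) by ring, sin_neg, neg_le_neg_iff]
      exact sin_le_sin_of_le_of_le_pi_div_two (by linarith)
        (by linarith [(hxy t (ht₁.trans ht)).2.2]) (by linarith [hyδ t ht])
  exact ⟨C, c, hC, hc, fun t ht => ⟨(hxy t ht).1, hdecay t ht⟩⟩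

end SectorEq

end SectorDynamics

theorem cusp_formation_exponential_general
    (ζ₁ ζ₂ γ : ℝ → ℝ)
    (hζ₁ : ∀ t ∈ Set.Ici (0 : ℝ), HasDerivWithinAt ζ₁
      (-Real.sin (ζ₁ t) * Real.sin (ζ₂ t) * Real.cos (2 * γ t + ζ₁ t + ζ₂ t))
      (Set.Ici (0 : ℝ)) t)
    (hζ₂ : ∀ t ∈ Set.Ici (0 : ℝ), HasDerivWithinAt ζ₂
      (Real.sin (ζ₂ t) * Real.sin (ζ₁ t) * Real.cos (2 * γ t + ζ₁ t + ζ₂ t))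
      (Set.Ici (0 : ℝ)) t)
    (hγ : ∀ t ∈ Set.Ici (0 : ℝ), HasDerivWithinAt γ
      (Real.sin (γ t) * Real.sin (ζ₁ t - ζ₂ t) * Real.cos (γ t + ζ₁ t + ζ₂ t))
      (Set.Ici (0 : ℝ)) t)
    (hζ₂0 : ζ₂ 0 ∈ Set.Ioo 0 (π / 4))
    (hγ0 : γ 0 ∈ Set.Ioo 0 (π / 4))
    (hsum : ζ₁ 0 + ζ₂ 0 = π / 4) :
    (γ 0 < ζ₂ 0 → ∃ C c : ℝ, 0 < C ∧ 0 < c ∧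
      ∀ t ∈ Set.Ici (0 : ℝ), 0 < ζ₁ t ∧ ζ₁ t ≤ C * Real.exp (-c * t)) ∧
    (ζ₂ 0 < γ 0 → ∃ C c : ℝ, 0 < C ∧ 0 < c ∧
      ∀ t ∈ Set.Ici (0 : ℝ), 0 < ζ₂ t ∧ ζ₂ t ≤ C * Real.exp (-c * t)) := by
  have hsum_t : ∀ t ∈ Ici (0 : ℝ), ζ₁ t + ζ₂ t = π / 4 := fun t ht => hsum ▸
    eq_of_hasDerivWithinAt_zero (w := fun t => ζ₁ t + ζ₂ t)
      (fun s hs => ((hζ₁ s hs).add (hζ₂ s hs)).congr_deriv (by ring)) t ht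
  obtain ⟨hx, hy⟩ := SectorDynamics.sectorEq_of_angles hsum_t hζ₂ hγ
  refine ⟨fun hlt => ?_, hx.exists_exp_decay hy hζ₂0 hγ0⟩
  obtain ⟨C, c, hC, hc, hdecay⟩ := hx.reflect.exists_exp_decay hy.reflect
    ⟨by linarith [hζ₂0.2], by linarith [hζ₂0.1]⟩ ⟨by linarith [hγ0.2], by linarith [hγ0.1]⟩
    (by linarith)
  refine ⟨C, c, hC, hc, fun t ht => ?_⟩
  rw [show ζ₁ t = π / 4 - ζ₂ t by linarith [hsum_t t ht]]
  exact hdecay t ht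

/-- cusp formation in infinite time at an exponential rate for the
two-sector angle dynamics: with `ζ₁(0) + ζ₂(0) = π/4` and `γ(0) ≠ ζ₂(0)`, one of the
two sector angles decays exponentially to zero. -/
theorem cusp_formation_exponential
    (ζ₁ ζ₂ γ : ℝ → ℝ)
    (hζ₁ : ∀ t ∈ Set.Ici (0 : ℝ), HasDerivWithinAt ζ₁
      (-Real.sin (ζ₁ t) * Real.sin (ζ₂ t) * Real.cos (2 * γ t + ζ₁ t + ζ₂ t))
      (Set.Ici (0 : ℝ)) t)
    (hζ₂ : ∀ t ∈ Set.Ici (0 : ℝ), HasDerivWithinAt ζ₂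
      (Real.sin (ζ₂ t) * Real.sin (ζ₁ t) * Real.cos (2 * γ t + ζ₁ t + ζ₂ t))
      (Set.Ici (0 : ℝ)) t)
    (hγ : ∀ t ∈ Set.Ici (0 : ℝ), HasDerivWithinAt γ
      (Real.sin (γ t) * Real.sin (ζ₁ t - ζ₂ t) * Real.cos (γ t + ζ₁ t + ζ₂ t))
      (Set.Ici (0 : ℝ)) t)
    (hζ₁0 : ζ₁ 0 ∈ Set.Ioo 0 (π / 4)) (hζ₂0 : ζ₂ 0 ∈ Set.Ioo 0 (π / 4))
    (hγ0 : γ 0 ∈ Set.Ioo 0 (π / 4))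
    (hsum : ζ₁ 0 + ζ₂ 0 = π / 4) (hne : γ 0 ≠ ζ₂ 0) :
    (γ 0 < ζ₂ 0 → ∃ C c : ℝ, 0 < C ∧ 0 < c ∧
      ∀ t ∈ Set.Ici (0 : ℝ), 0 < ζ₁ t ∧ ζ₁ t ≤ C * Real.exp (-c * t)) ∧
    (ζ₂ 0 < γ 0 → ∃ C c : ℝ, 0 < C ∧ 0 < c ∧
      ∀ t ∈ Set.Ici (0 : ℝ), 0 < ζ₂ t ∧ ζ₂ t ≤ C * Real.exp (-c * t)) :=
  cusp_formation_exponential_general ζ₁ ζ₂ γ hζ₁ hζ₂ hγ hζ₂0 hγ0 hsum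
end

section
/- Let T > 0, r_0 > 0 and 0 < η < 1. Let Ω ⊂ ℝ² be a measurable set of finite positive Lebesgue measure, and let Φ : [0, T] × ℝ² → ℝ² be a measurable map such that for each t ∈ [0, T] the map Φ(t, ·) preserves Lebesgue measure in the sense that |{x ∈ ℝ² : Φ(t,x) ∈ A}| = |A| for every measurable A ⊂ ℝ². If η·|Ω| > π·r_0², then there exists a point x̃ ∈ Ω such that |{t ∈ [0, T] : |Φ(t, x̃)| ≥ r_0}| ≥ (1 - η)·T, i.e., the trajectory of x̃ spends at least a (1-η)-fraction of the time interval [0, T] outside the ball of radius r_0 centered at the origin. -/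
open Real MeasureTheory Set

lemma ball_vol_two (r : ℝ) (hr : 0 ≤ r) :
    volume (Metric.ball (0 : EuclideanSpace ℝ (Fin 2)) r) = ENNReal.ofReal (π * r ^ 2) := by
  rw [EuclideanSpace.volume_ball]
  have h2 : (Fintype.card (Fin 2) : ℝ) = 2 := by simp
  rw [Fintype.card_fin]
  have : Real.sqrt π ^ 2 / Real.Gamma ((2 : ℕ) / 2 + 1) = π := by
    rw [Real.sq_sqrt Real.pi_nonneg]
    norm_num [Real.Gamma_two]
  rw [this, ← ENNReal.ofReal_pow hr, ← ENNReal.ofReal_mul (by positivity), mul_comm]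

/-- pigeonhole for measure-preserving flows: if `η·|Ω| > π·r₀²`, some
point of `Ω` spends at least a `(1-η)`-fraction of the time interval `[0, T]` outside
the ball `B(0, r₀)`. -/
theorem particle_spends_time_outside_ball
    (T r₀ η : ℝ) (hT : 0 < T) (hr : 0 < r₀) (hη0 : 0 < η) (hη1 : η < 1)
    (Ω : Set (EuclideanSpace ℝ (Fin 2))) (hΩm : MeasurableSet Ω)
    (hΩpos : 0 < volume Ω) (hΩfin : volume Ω < ⊤)
    (Φ : ℝ → EuclideanSpace ℝ (Fin 2) → EuclideanSpace ℝ (Fin 2))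
    (hΦmeas : Measurable (Function.uncurry Φ))
    (hΦpres : ∀ t ∈ Set.Icc (0 : ℝ) T, ∀ A : Set (EuclideanSpace ℝ (Fin 2)),
      MeasurableSet A → volume (Φ t ⁻¹' A) = volume A)
    (hgap : π * r₀ ^ 2 < η * (volume Ω).toReal) :
    ∃ x ∈ Ω, (1 - η) * T ≤
      (volume {t : ℝ | t ∈ Set.Icc (0 : ℝ) T ∧ r₀ ≤ ‖Φ t x‖}).toReal := by
  by_contra hcon
  push_neg at hcon
  set μ : Measure ℝ := volume.restrict (Set.Icc (0 : ℝ) T) with hμ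
  set ν : Measure (EuclideanSpace ℝ (Fin 2)) := volume.restrict Ω with hν
  set S : Set (ℝ × EuclideanSpace ℝ (Fin 2)) := {p | ‖Function.uncurry Φ p‖ < r₀} with hS
  have hSm : MeasurableSet S := measurableSet_lt hΦmeas.norm measurable_const
  -- upper bound via t-slices
  have hupper : (μ.prod ν) S ≤ ENNReal.ofReal (π * r₀ ^ 2) * ENNReal.ofReal T := by
    rw [Measure.prod_apply hSm]
    have hbound : ∀ t ∈ Set.Icc (0 : ℝ) T,
        ν (Prod.mk t ⁻¹' S) ≤ ENNReal.ofReal (π * r₀ ^ 2) := by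
      intro t ht
      have hpre : Prod.mk t ⁻¹' S = Φ t ⁻¹' (Metric.ball (0 : EuclideanSpace ℝ (Fin 2)) r₀) := by
        ext x; simp [hS, Function.uncurry, Metric.mem_ball, dist_eq_norm]
      calc ν (Prod.mk t ⁻¹' S) ≤ volume (Prod.mk t ⁻¹' S) :=
            Measure.restrict_le_self _
        _ = volume (Metric.ball (0 : EuclideanSpace ℝ (Fin 2)) r₀) := by
            rw [hpre]; exact hΦpres t ht _ measurableSet_ball
        _ = ENNReal.ofReal (π * r₀ ^ 2) := ball_vol_two r₀ hr.le
    calc ∫⁻ t, ν (Prod.mk t ⁻¹' S) ∂μ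
        ≤ ∫⁻ _, ENNReal.ofReal (π * r₀ ^ 2) ∂μ := by
          rw [hμ]
          exact setLIntegral_mono_ae (by fun_prop)
            (Filter.Eventually.of_forall hbound)
      _ = ENNReal.ofReal (π * r₀ ^ 2) * ENNReal.ofReal T := by
          rw [lintegral_const, hμ, Measure.restrict_apply_univ, Real.volume_Icc]
          norm_num
  -- lower bound via x-slices
  have hlower : ENNReal.ofReal (η * T) * volume Ω ≤ (μ.prod ν) S := by
    rw [Measure.prod_apply_symm hSm]
    have hbound : ∀ x ∈ Ω, ENNReal.ofReal (η * T) ≤ μ ((fun t => (t, x)) ⁻¹' S) := by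
      intro x hx
      have hfx : Measurable fun t => Φ t x :=
        hΦmeas.comp measurable_prodMk_right
      set O : Set ℝ := {t : ℝ | t ∈ Set.Icc (0 : ℝ) T ∧ r₀ ≤ ‖Φ t x‖} with hO
      have hOm : MeasurableSet O :=
        (measurableSet_Icc.inter (measurableSet_le measurable_const hfx.norm))
      have hOsub : O ⊆ Set.Icc (0 : ℝ) T := fun t ht => ht.1
      have hOfin : volume O ≠ ⊤ :=
        ((measure_mono hOsub).trans_lt (by rw [Real.volume_Icc]; exact ENNReal.ofReal_lt_top)).ne
      have hslice : (fun t => (t, x)) ⁻¹' S ∩ Set.Icc (0 : ℝ) T = Set.Icc (0 : ℝ) T \ O := by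
        ext t
        simp only [hS, Set.mem_inter_iff, Set.mem_preimage, Set.mem_setOf_eq, Set.mem_diff,
          Function.uncurry, hO, not_and, not_le]
        constructor
        · rintro ⟨h1, h2⟩; exact ⟨h2, fun _ => h1⟩
        · rintro ⟨h1, h2⟩; exact ⟨h2 h1, h1⟩
      have hpre2 : (fun t => (t, x)) ⁻¹' S = {t : ℝ | ‖Φ t x‖ < r₀} := rfl
      have hμslice : μ ((fun t => (t, x)) ⁻¹' S) = ENNReal.ofReal T - volume O := by
        rw [hμ, hpre2, Measure.restrict_apply (measurableSet_lt hfx.norm measurable_const),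
          show {t : ℝ | ‖Φ t x‖ < r₀} ∩ Set.Icc 0 T = Set.Icc (0:ℝ) T \ O from (hpre2 ▸ hslice),
          measure_diff hOsub hOm.nullMeasurableSet hOfin, Real.volume_Icc]
        norm_num
      rw [hμslice]
      have hOlt : (volume O).toReal < (1 - η) * T := hcon x hx
      have hOle : volume O ≤ ENNReal.ofReal ((1 - η) * T) :=
        le_of_lt (ENNReal.lt_ofReal_iff_toReal_lt hOfin |>.mpr hOlt)
      calc ENNReal.ofReal (η * T)
          = ENNReal.ofReal T - ENNReal.ofReal ((1 - η) * T) := by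
            rw [← ENNReal.ofReal_sub _ (by nlinarith)]
            ring_nf
        _ ≤ ENNReal.ofReal T - volume O := tsub_le_tsub_left hOle _
    calc ENNReal.ofReal (η * T) * volume Ω
        = ∫⁻ _, ENNReal.ofReal (η * T) ∂ν := by
          rw [lintegral_const, hν, Measure.restrict_apply_univ]
      _ ≤ ∫⁻ x, μ ((fun t => (t, x)) ⁻¹' S) ∂ν := by
          rw [hν]
          exact setLIntegral_mono_ae (measurable_measure_prodMk_right (μ := μ) hSm).aemeasurable
            (Filter.Eventually.of_forall hbound)
  have hfinal : ENNReal.ofReal (η * T) * volume Ω ≤ ENNReal.ofReal (π * r₀ ^ 2) * ENNReal.ofReal T :=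
    hlower.trans hupper
  have hRfin : ENNReal.ofReal (π * r₀ ^ 2) * ENNReal.ofReal T ≠ ⊤ :=
    ENNReal.mul_ne_top ENNReal.ofReal_ne_top ENNReal.ofReal_ne_top
  have := ENNReal.toReal_mono hRfin hfinal
  rw [ENNReal.toReal_mul, ENNReal.toReal_mul, ENNReal.toReal_ofReal (by positivity),
    ENNReal.toReal_ofReal (by positivity), ENNReal.toReal_ofReal hT.le] at this
  nlinarith [ENNReal.toReal_pos hΩpos.ne' hΩfin.ne, mul_lt_mul_of_pos_right hgap hT]
end
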